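/- arXiv:2210.02008 — 5 statements merged into one kernel-verified Lean document; each statement's English description precedes it below -/
import Mathlib

section
/- The fiberwise Wick product ⋆ makes A[ħ] into an associative unital ℂ[ħ]-algebra: for all f, g, h ∈ A[ħ] one has (f ⋆ g) ⋆ h = f ⋆ (g ⋆ h), and 1 ⋆ f = f ⋆ 1 = f. -/
/-!
STATEMENT 0: The fiberwise Wick product ⋆ makes A[ħ] into an associative unital
ℂ[ħ]-algebra: for all f, g, h ∈ A[ħ] one has (f ⋆ g) ⋆ h = f ⋆ (g ⋆ h), and
1 ⋆ f = f ⋆ 1 = f.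
-/

open MvPolynomial

namespace Stmt0

/-- Variables: `Sum.inl (Sum.inl i)` is `yⁱ`, `Sum.inl (Sum.inr i)` is `ȳⁱ`,
and `Sum.inr ()` is the formal variable `ħ`. -/
abbrev V (n : ℕ) : Type := (Fin n ⊕ Fin n) ⊕ Unit

/-- `A[ħ] = ℂ[y¹,…,yⁿ,ȳ¹,…,ȳⁿ][ħ]`. -/
abbrev W (n : ℕ) : Type := MvPolynomial (V n) ℂ

/-- The variable `ħ`. -/
noncomputable def hbar (n : ℕ) : W n := X (Sum.inr ())

/-- The variable `yⁱ`. -/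
def yv {n : ℕ} (i : Fin n) : V n := Sum.inl (Sum.inl i)

/-- The variable `ȳⁱ`. -/
def yb {n : ℕ} (i : Fin n) : V n := Sum.inl (Sum.inr i)

/-- Iterated partial derivative along a tuple of variables. -/
noncomputable def iterD {n k : ℕ} (vs : Fin k → V n) (f : W n) : W n :=
  (List.ofFn vs).foldr (fun v acc => pderiv v acc) f

/-- The `k`-th term `(1/k!) Σ_{i₁,…,i_k} (∂ᵏf/∂y^{i₁}⋯∂y^{i_k})·(∂ᵏg/∂ȳ^{i₁}⋯∂ȳ^{i_k})`
in the Wick product. -/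
noncomputable def wickTerm {n : ℕ} (k : ℕ) (f g : W n) : W n :=
  ((k.factorial : ℂ))⁻¹ •
    ∑ t : Fin k → Fin n,
      iterD (fun j => yv (t j)) f * iterD (fun j => yb (t j)) g

/-- The fiberwise Wick product `f ⋆ g = Σ_{k≥0} ħᵏ · (k-th term)`.  The sum is
finite: the `k`-fold `y`-derivative of `f` vanishes once `k > totalDegree f`,
so truncating the range at `totalDegree f + 1` loses nothing. -/
noncomputable def wick {n : ℕ} (f g : W n) : W n :=
  ∑ k ∈ Finset.range (f.totalDegree + 1), hbar n ^ k * wickTerm k f g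

end Stmt0

/-!
Induct on the left factor. Multiplying the left factor by a polynomial free of the `yⁱ` commutes
with `⋆`, and each `∂/∂ȳⁱ` is a derivation of `⋆`. The remaining case `yⁱ p` rests on the Leibniz
rule `(yⁱ p) ⋆ g = yⁱ (p ⋆ g) + ħ p ⋆ ∂g/∂ȳⁱ`: applied to both sides of the associativity identity,
it reduces it to the induction hypothesis for `p`. The Leibniz rule comes from the recursion
`S_{k+1}(f, g) = Σᵢ S_k(∂f/∂yⁱ, ∂g/∂ȳⁱ)` for the unnormalised terms `S_k = k! · (k-th term)`,
which gives `S_{k+1}(yⁱ p, g) = yⁱ S_{k+1}(p, g) + (k+1) S_k(p, ∂g/∂ȳⁱ)`.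
-/

namespace MvPolynomial

variable {R σ : Type*} [CommSemiring R]

theorem pderiv_pderiv_comm (i j : σ) (p : MvPolynomial σ R) :
    pderiv i (pderiv j p) = pderiv j (pderiv i p) := by
  classical
  induction p using MvPolynomial.induction_on with
  | C a => simp
  | add p q hp hq => simp [hp, hq]
  | mul_X p k hp =>
    simp only [pderiv_mul, pderiv_X, map_add, hp, Pi.single_apply, apply_ite (pderiv _), pderiv_one,
      map_zero, ite_self, mul_zero, add_zero]
    ring

theorem totalDegree_pderiv_lt {i : σ} {p : MvPolynomial σ R} (h : pderiv i p ≠ 0) :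
    (pderiv i p).totalDegree < p.totalDegree := by
  obtain ⟨m, hm, hdeg⟩ := Finset.exists_mem_eq_sup _ (support_nonempty.2 h)
    fun s : σ →₀ ℕ => s.sum fun _ e => e
  have hcoeff : m + Finsupp.single i 1 ∈ p.support := by
    rw [mem_support_iff, coeff_pderiv] at hm
    exact mem_support_iff.2 (left_ne_zero_of_mul hm)
  calc (pderiv i p).totalDegree = m.sum fun _ e => e := hdeg
    _ < (m + Finsupp.single i 1).sum fun _ e => e := by
      rw [Finsupp.sum_add_index' (fun _ => rfl) fun _ _ _ => rfl, Finsupp.sum_single_index rfl]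
      omega
    _ ≤ p.totalDegree := le_totalDegree hcoeff

end MvPolynomial

namespace Stmt0

variable {n k : ℕ}

theorem iterD_fin_zero (vs : Fin 0 → V n) (f : W n) : iterD vs f = f := rfl

theorem iterD_succ (vs : Fin (k + 1) → V n) (f : W n) :
    iterD vs f = pderiv (vs 0) (iterD (Fin.tail vs) f) := by
  rw [iterD, List.ofFn_succ]
  rfl

theorem pderiv_iterD (v : V n) (vs : Fin k → V n) (f : W n) :
    pderiv v (iterD vs f) = iterD vs (pderiv v f) := by
  induction k with
  | zero => rfl
  | succ k ih => rw [iterD_succ, iterD_succ, pderiv_pderiv_comm, ih]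

theorem iterD_succ' (vs : Fin (k + 1) → V n) (f : W n) :
    iterD vs f = iterD (Fin.tail vs) (pderiv (vs 0) f) := by
  rw [iterD_succ, pderiv_iterD]

theorem iterD_add (vs : Fin k → V n) (f g : W n) :
    iterD vs (f + g) = iterD vs f + iterD vs g := by
  induction k with
  | zero => rfl
  | succ k ih => rw [iterD_succ, iterD_succ, iterD_succ, ih, map_add]

theorem iterD_zero (vs : Fin k → V n) : iterD vs (0 : W n) = 0 := by
  induction k with
  | zero => rfl
  | succ k ih => rw [iterD_succ, ih, map_zero]

theorem iterD_mul_of_pderiv_eq_zero {vs : Fin k → V n} {u : W n}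
    (hu : ∀ j, pderiv (vs j) u = 0) (f : W n) : iterD vs (u * f) = u * iterD vs f := by
  induction k with
  | zero => rfl
  | succ k ih =>
    rw [iterD_succ, iterD_succ, ih (vs := Fin.tail vs) fun j => hu j.succ, pderiv_mul, hu 0,
      zero_mul, zero_add]

theorem iterD_eq_zero_of_totalDegree_lt (vs : Fin k → V n) {f : W n} (h : f.totalDegree < k) :
    iterD vs f = 0 := by
  induction k generalizing f with
  | zero => omega
  | succ k ih =>
    rw [iterD_succ']
    by_cases h0 : pderiv (vs 0) f = 0
    · rw [h0, iterD_zero]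
    · exact ih _ (by have := totalDegree_pderiv_lt h0; omega)

noncomputable def wickSum (k : ℕ) (f g : W n) : W n :=
  ∑ t : Fin k → Fin n, iterD (fun j => yv (t j)) f * iterD (fun j => yb (t j)) g

theorem wickTerm_eq_smul_wickSum (k : ℕ) (f g : W n) :
    wickTerm k f g = (k.factorial : ℂ)⁻¹ • wickSum k f g := rfl

theorem wickSum_zero (f g : W n) : wickSum 0 f g = f * g := by
  simp [wickSum, iterD_fin_zero]

theorem wickSum_succ (f g : W n) :
    wickSum (k + 1) f g = ∑ i, wickSum k (pderiv (yv i) f) (pderiv (yb i) g) := by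
  rw [wickSum, ← (Fin.consEquiv fun _ => Fin n).sum_comp, Fintype.sum_prod_type]
  simp only [wickSum, iterD_succ', Fin.consEquiv_apply, Fin.cons_zero, Fin.tail_def, Fin.cons_succ]

theorem wickSum_add_left (f₁ f₂ g : W n) :
    wickSum k (f₁ + f₂) g = wickSum k f₁ g + wickSum k f₂ g := by
  simp only [wickSum, iterD_add, add_mul, Finset.sum_add_distrib]

theorem wickSum_add_right (f g₁ g₂ : W n) :
    wickSum k f (g₁ + g₂) = wickSum k f g₁ + wickSum k f g₂ := by
  simp only [wickSum, iterD_add, mul_add, Finset.sum_add_distrib]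

theorem wickSum_zero_left (g : W n) : wickSum k 0 g = 0 := by
  simp only [wickSum, iterD_zero, zero_mul, Finset.sum_const_zero]

theorem wickSum_mul_left {u : W n} (hu : ∀ i, pderiv (yv i) u = 0) (f g : W n) :
    wickSum k (u * f) g = u * wickSum k f g := by
  simp only [wickSum, iterD_mul_of_pderiv_eq_zero fun j => hu _, Finset.mul_sum, mul_assoc]

theorem wickSum_mul_right {w : W n} (hw : ∀ i, pderiv (yb i) w = 0) (f g : W n) :
    wickSum k f (w * g) = w * wickSum k f g := by
  simp only [wickSum, iterD_mul_of_pderiv_eq_zero fun j => hw _, Finset.mul_sum, mul_left_comm]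

theorem wickSum_eq_zero_of_totalDegree_lt_left {f : W n} (h : f.totalDegree < k) (g : W n) :
    wickSum k f g = 0 :=
  Finset.sum_eq_zero fun t _ => by rw [iterD_eq_zero_of_totalDegree_lt _ h, zero_mul]

theorem wickSum_eq_zero_of_totalDegree_lt_right (f : W n) {g : W n} (h : g.totalDegree < k) :
    wickSum k f g = 0 :=
  Finset.sum_eq_zero fun t _ => by rw [iterD_eq_zero_of_totalDegree_lt _ h, mul_zero]

theorem pderiv_wickSum (v : V n) (f g : W n) :
    pderiv v (wickSum k f g) = wickSum k (pderiv v f) g + wickSum k f (pderiv v g) := by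
  simp only [wickSum, map_sum, pderiv_mul, pderiv_iterD, Finset.sum_add_distrib]

theorem wickSum_succ_X_mul (i : Fin n) (p g : W n) :
    wickSum (k + 1) (X (yv i) * p) g =
      wickSum k p (pderiv (yb i) g) +
        ∑ j, wickSum k (X (yv i) * pderiv (yv j) p) (pderiv (yb j) g) := by
  simp only [wickSum_succ, pderiv_mul, wickSum_add_left, Finset.sum_add_distrib]
  congr 1
  rw [Finset.sum_eq_single i, pderiv_X_self, one_mul]
  · intro j _ hji
    rw [pderiv_X_of_ne (by simpa [yv] using hji.symm), zero_mul, wickSum_zero_left]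
  · simp

theorem wickSum_X_mul (i : Fin n) (p g : W n) :
    wickSum (k + 1) (X (yv i) * p) g =
      X (yv i) * wickSum (k + 1) p g + (k + 1) • wickSum k p (pderiv (yb i) g) := by
  induction k generalizing p g with
  | zero =>
    simp only [wickSum_succ_X_mul, wickSum_succ p, wickSum_zero, Finset.mul_sum, mul_assoc,
      zero_add, one_smul]
    ring
  | succ k ih =>
    have hcomm : ∀ j, pderiv (yb i) (pderiv (yb j) g) = pderiv (yb j) (pderiv (yb i) g) :=
      fun j => pderiv_pderiv_comm _ _ _
    simp only [wickSum_succ_X_mul (k := k + 1), ih, Finset.sum_add_distrib, ← Finset.mul_sum,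
      ← Finset.smul_sum, hcomm, ← wickSum_succ]
    rw [add_smul, one_smul]
    ring

theorem wickTerm_zero (f g : W n) : wickTerm 0 f g = f * g := by
  rw [wickTerm_eq_smul_wickSum, wickSum_zero, Nat.factorial_zero, Nat.cast_one, inv_one, one_smul]

theorem wickTerm_X_mul (i : Fin n) (p g : W n) :
    wickTerm (k + 1) (X (yv i) * p) g =
      X (yv i) * wickTerm (k + 1) p g + wickTerm k p (pderiv (yb i) g) := by
  simp only [wickTerm_eq_smul_wickSum, wickSum_X_mul, smul_add, mul_smul_comm]
  rw [← Nat.cast_smul_eq_nsmul ℂ, smul_smul, Nat.factorial_succ, Nat.cast_mul, mul_inv_rev,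
    mul_assoc, inv_mul_cancel₀ (Nat.cast_ne_zero.2 k.succ_ne_zero), mul_one]

theorem wick_eq_sum_range {f : W n} {N : ℕ} (h : f.totalDegree < N) (g : W n) :
    wick f g = ∑ k ∈ Finset.range N, hbar n ^ k * wickTerm k f g := by
  refine Finset.sum_subset (Finset.range_subset_range.2 h) fun k _ hk => ?_
  rw [Finset.mem_range, not_lt] at hk
  rw [wickTerm_eq_smul_wickSum, wickSum_eq_zero_of_totalDegree_lt_left hk, smul_zero, mul_zero]

theorem wick_add_left (f₁ f₂ g : W n) : wick (f₁ + f₂) g = wick f₁ g + wick f₂ g := by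
  set N := (f₁ + f₂).totalDegree + f₁.totalDegree + f₂.totalDegree + 1
  rw [wick_eq_sum_range (N := N) (by omega), wick_eq_sum_range (N := N) (by omega),
    wick_eq_sum_range (N := N) (by omega), ← Finset.sum_add_distrib]
  simp only [wickTerm_eq_smul_wickSum, wickSum_add_left, smul_add, mul_add]

theorem wick_add_right (f g₁ g₂ : W n) : wick f (g₁ + g₂) = wick f g₁ + wick f g₂ := by
  simp only [wick, ← Finset.sum_add_distrib, wickTerm_eq_smul_wickSum, wickSum_add_right,
    smul_add, mul_add]

theorem wick_mul_left {u : W n} (hu : ∀ i, pderiv (yv i) u = 0) (f g : W n) :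
    wick (u * f) g = u * wick f g := by
  set N := (u * f).totalDegree + f.totalDegree + 1
  rw [wick_eq_sum_range (N := N) (by omega), wick_eq_sum_range (N := N) (by omega), Finset.mul_sum]
  simp only [wickTerm_eq_smul_wickSum, wickSum_mul_left hu, mul_smul_comm, mul_left_comm]

theorem wick_mul_right {w : W n} (hw : ∀ i, pderiv (yb i) w = 0) (f g : W n) :
    wick f (w * g) = w * wick f g := by
  simp only [wick, Finset.mul_sum, wickTerm_eq_smul_wickSum, wickSum_mul_right hw, mul_smul_comm,
    mul_left_comm]

theorem wick_one_left (f : W n) : wick 1 f = f := by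
  rw [wick, totalDegree_one, zero_add, Finset.sum_range_one, pow_zero, one_mul, wickTerm_zero,
    one_mul]

theorem wick_one_right (f : W n) : wick f 1 = f := by
  rw [wick, Finset.sum_eq_single 0, pow_zero, one_mul, wickTerm_zero, mul_one]
  · intro k _ hk
    rw [wickTerm_eq_smul_wickSum, wickSum_eq_zero_of_totalDegree_lt_right _ (by rw [totalDegree_one]; omega),
      smul_zero, mul_zero]
  · simp

theorem pderiv_inl_hbar (w : Fin n ⊕ Fin n) : pderiv (Sum.inl w) (hbar n) = 0 :=
  pderiv_X_of_ne Sum.inr_ne_inl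

theorem pderiv_wick {v : V n} (hv : pderiv v (hbar n) = 0) (f g : W n) :
    pderiv v (wick f g) = wick (pderiv v f) g + wick f (pderiv v g) := by
  set N := f.totalDegree + (pderiv v f).totalDegree + 1
  rw [wick_eq_sum_range (N := N) (by omega), wick_eq_sum_range (N := N) (by omega),
    wick_eq_sum_range (N := N) (by omega), map_sum, ← Finset.sum_add_distrib]
  simp only [wickTerm_eq_smul_wickSum, pderiv_mul, pderiv_pow, hv, mul_zero, zero_mul,
    zero_add, Derivation.map_smul, pderiv_wickSum, smul_add, mul_add]

theorem wick_X_mul (i : Fin n) (p g : W n) :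
    wick (X (yv i) * p) g = X (yv i) * wick p g + hbar n * wick p (pderiv (yb i) g) := by
  set N := (X (yv i) * p).totalDegree + p.totalDegree + 1
  have hterm : ∀ k, hbar n ^ (k + 1) * wickTerm (k + 1) (X (yv i) * p) g =
      X (yv i) * (hbar n ^ (k + 1) * wickTerm (k + 1) p g) +
        hbar n * (hbar n ^ k * wickTerm k p (pderiv (yb i) g)) := fun k => by
    rw [wickTerm_X_mul]
    ring
  rw [wick_eq_sum_range (N := N + 1) (by omega), wick_eq_sum_range (N := N + 1) (by omega),
    wick_eq_sum_range (N := N) (by omega),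
    Finset.sum_range_succ' fun k => hbar n ^ k * wickTerm k (X (yv i) * p) g,
    Finset.sum_range_succ' fun k => hbar n ^ k * wickTerm k p g,
    Finset.sum_congr rfl fun k _ => hterm k, Finset.sum_add_distrib, ← Finset.mul_sum,
    ← Finset.mul_sum, wickTerm_zero, wickTerm_zero]
  ring

theorem wick_assoc (f g h : W n) : wick (wick f g) h = wick f (wick g h) := by
  induction f using MvPolynomial.induction_on generalizing g h with
  | C a =>
    have hC : ∀ i, pderiv (yv i) (C a : W n) = 0 := fun _ => pderiv_C
    rw [← mul_one (C a), wick_mul_left hC, wick_mul_left hC, wick_mul_left hC, wick_one_left,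
      wick_one_left]
  | add p q hp hq => rw [wick_add_left, wick_add_left, wick_add_left, hp, hq]
  | mul_X p v hp =>
    rw [mul_comm]
    by_cases hv : ∃ i, v = yv i
    · obtain ⟨i, rfl⟩ := hv
      rw [wick_X_mul i p g, wick_add_left, wick_X_mul i (wick p g) h,
        wick_mul_left (fun _ => pderiv_inl_hbar _), hp, hp, hp, wick_X_mul i p (wick g h),
        pderiv_wick (v := yb i) (pderiv_inl_hbar _), wick_add_right]
      ring
    · have hX : ∀ j, pderiv (yv j) (X v : W n) = 0 :=
        fun j => pderiv_X_of_ne fun h => hv ⟨j, h⟩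
      rw [wick_mul_left hX, wick_mul_left hX, hp, wick_mul_left hX]

theorem wick_assoc_unital_general (n : ℕ) :
    (∀ f g h : W n, wick (wick f g) h = wick f (wick g h)) ∧
    (∀ f : W n, wick 1 f = f ∧ wick f 1 = f) ∧
    (∀ f g h : W n, wick (f + g) h = wick f h + wick g h) ∧
    (∀ f g h : W n, wick f (g + h) = wick f g + wick f h) ∧
    (∀ (a : ℂ) (m : ℕ) (f g : W n),
      wick ((C a * hbar n ^ m) * f) g = (C a * hbar n ^ m) * wick f g ∧
      wick f ((C a * hbar n ^ m) * g) = (C a * hbar n ^ m) * wick f g) := by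
  have hfree (a : ℂ) (m : ℕ) (w : Fin n ⊕ Fin n) :
      pderiv (Sum.inl w) (C a * hbar n ^ m) = 0 := by
    rw [pderiv_C_mul, pderiv_pow, pderiv_inl_hbar, mul_zero, mul_zero]
  exact ⟨wick_assoc, fun f => ⟨wick_one_left f, wick_one_right f⟩, wick_add_left, wick_add_right,
    fun a m f g =>
      ⟨wick_mul_left (fun _ => hfree a m _) f g, wick_mul_right (fun _ => hfree a m _) f g⟩⟩

/-- the Wick product is ℂ[ħ]-bilinear, associative, and unital. -/
theorem wick_assoc_unital (n : ℕ) (hn : 1 ≤ n) :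
    (∀ f g h : W n, wick (wick f g) h = wick f (wick g h)) ∧
    (∀ f : W n, wick 1 f = f ∧ wick f 1 = f) ∧
    (∀ f g h : W n, wick (f + g) h = wick f h + wick g h) ∧
    (∀ f g h : W n, wick f (g + h) = wick f g + wick f h) ∧
    (∀ (a : ℂ) (m : ℕ) (f g : W n),
      wick ((C a * hbar n ^ m) * f) g = (C a * hbar n ^ m) * wick f g ∧
      wick f ((C a * hbar n ^ m) * g) = (C a * hbar n ^ m) * wick f g) :=
  wick_assoc_unital_general n

end Stmt0
end

section
/- The level-c Wick algebra is almost commutative for the anti-holomorphic degree filtration: for all f, g ∈ A and any c ∈ ℂ, (i) f ⋆_c g − f·g has ȳ-degree at most deg_ȳ f + deg_ȳ g − 1 (so the associated graded algebra is the commutative polynomial algebra), and (ii) f ⋆_c g − g ⋆_c f − c·Σ_{i=1}^{n}((∂f/∂yⁱ)(∂g/∂ȳⁱ) − (∂g/∂yⁱ)(∂f/∂ȳⁱ)) has ȳ-degree at most deg_ȳ f + deg_ȳ g − 2. -/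
/-!
STATEMENT 8: The level-c Wick algebra is almost commutative for the
anti-holomorphic degree filtration: for all f, g ∈ A and any c ∈ ℂ,
(i) f ⋆_c g − f·g has ȳ-degree at most deg_ȳ f + deg_ȳ g − 1 (so the associated
graded algebra is the commutative polynomial algebra), and
(ii) f ⋆_c g − g ⋆_c f − c·Σᵢ((∂f/∂yⁱ)(∂g/∂ȳⁱ) − (∂g/∂yⁱ)(∂f/∂ȳⁱ)) has
ȳ-degree at most deg_ȳ f + deg_ȳ g − 2.
(The inequalities are stated without ℕ-truncated subtraction: every monomial of
the difference has ȳ-degree + 1 (resp. + 2) at most deg_ȳ f + deg_ȳ g.)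
-/

namespace Stmt8

open MvPolynomial

/-- `A = ℂ[y¹,…,yⁿ,ȳ¹,…,ȳⁿ]`; `Sum.inl i` is `yⁱ` and `Sum.inr i` is `ȳⁱ`. -/
abbrev A (n : ℕ) : Type := MvPolynomial (Fin n ⊕ Fin n) ℂ

/-- Iterated partial derivative along a tuple of variables. -/
noncomputable def iterD {n k : ℕ} (vs : Fin k → (Fin n ⊕ Fin n)) (f : A n) : A n :=
  (List.ofFn vs).foldr (fun v acc => pderiv v acc) f

/-- The `k`-th term `(cᵏ/k!) Σ_{i₁,…,i_k} (∂ᵏf/∂y^{i₁}⋯∂y^{i_k})·(∂ᵏg/∂ȳ^{i₁}⋯∂ȳ^{i_k})`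
in the level-`c` Wick product. -/
noncomputable def wickTermc {n : ℕ} (c : ℂ) (k : ℕ) (f g : A n) : A n :=
  (c ^ k * ((k.factorial : ℂ))⁻¹) •
    ∑ t : Fin k → Fin n,
      iterD (fun j => Sum.inl (t j)) f * iterD (fun j => Sum.inr (t j)) g

/-- The level-`c` Wick product `f ⋆_c g = Σ_{k≥0} (cᵏ/k!) Σ (∂_y^k f)(∂_ȳ^k g)`;
the sum is finite since the `k`-fold derivative of `f` vanishes for
`k > totalDegree f`, so truncating at `totalDegree f + 1` loses nothing. -/
noncomputable def wickc {n : ℕ} (c : ℂ) (f g : A n) : A n :=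
  ∑ k ∈ Finset.range (f.totalDegree + 1), wickTermc c k f g

/-- The total degree of `f ∈ A` in the variables `ȳ¹,…,ȳⁿ`. -/
def degYb {n : ℕ} (f : A n) : ℕ :=
  f.support.sup fun m => ∑ i : Fin n, m (Sum.inr i)

/-!
Each `∂/∂ȳⁱ` lowers the ȳ-degree of a monomial by one and each `∂/∂yⁱ` does not raise it, so the
`k`-th Wick term of `f` and `g` has ȳ-degree at most `deg_ȳ f + deg_ȳ g - k`. The `k = 0` term is
`f * g`, and the `k = 1` terms of `f ⋆_c g` and `g ⋆_c f` differ by exactly the bracket term, so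
what remains in (i), resp. (ii), consists of terms with `k ≥ 1`, resp. `k ≥ 2`.
-/

section Pderiv

variable {R σ : Type*} [CommSemiring R]

theorem add_single_mem_support_of_mem_support_pderiv {i : σ} {p : MvPolynomial σ R}
    {m : σ →₀ ℕ} (h : m ∈ (pderiv i p).support) : m + Finsupp.single i 1 ∈ p.support := by
  rw [mem_support_iff, coeff_pderiv] at h
  exact mem_support_iff.2 (left_ne_zero_of_mul h)

theorem add_sum_single_mem_support_of_mem_support_foldr_pderiv (l : List σ)
    {p : MvPolynomial σ R} {m : σ →₀ ℕ} (h : m ∈ (l.foldr (fun i q => pderiv i q) p).support) :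
    m + (l.map fun i => Finsupp.single i 1).sum ∈ p.support := by
  induction l generalizing m with
  | nil => simpa using h
  | cons i l ih =>
    rw [List.map_cons, List.sum_cons, ← add_assoc]
    exact ih (add_single_mem_support_of_mem_support_pderiv h)

theorem weight_add_le_weightedTotalDegree_of_mem_support_foldr_pderiv (w : σ → ℕ) (l : List σ)
    {p : MvPolynomial σ R} {m : σ →₀ ℕ} (h : m ∈ (l.foldr (fun i q => pderiv i q) p).support) :
    Finsupp.weight w m + (l.map w).sum ≤ p.weightedTotalDegree w := by
  have := le_weightedTotalDegree w (add_sum_single_mem_support_of_mem_support_foldr_pderiv l h)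
  simpa [map_list_sum, List.map_map, Function.comp_def, Finsupp.weight_single] using this

theorem foldr_pderiv_eq_zero_of_totalDegree_lt (l : List σ) {p : MvPolynomial σ R}
    (h : p.totalDegree < l.length) : l.foldr (fun i q => pderiv i q) p = 0 := by
  rw [← support_eq_empty, Finset.eq_empty_iff_forall_notMem]
  intro m hm
  have := weight_add_le_weightedTotalDegree_of_mem_support_foldr_pderiv 1 l hm
  rw [weightedTotalDegree_one, show l.map (1 : σ → ℕ) = l.map fun _ => 1 from rfl,
    List.map_const', List.sum_replicate, smul_eq_mul, mul_one] at this
  omega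

end Pderiv

section Wick

variable {n : ℕ}

def ybarWeight : Fin n ⊕ Fin n → ℕ := Sum.elim 0 1

theorem weight_ybarWeight (m : Fin n ⊕ Fin n →₀ ℕ) :
    Finsupp.weight ybarWeight m = ∑ i : Fin n, m (Sum.inr i) := by
  simp [Finsupp.weight_eq_sum, Fintype.sum_sum_type, ybarWeight]

theorem degYb_eq_weightedTotalDegree (f : A n) : degYb f = f.weightedTotalDegree ybarWeight := by
  simp only [degYb, weightedTotalDegree, weight_ybarWeight]

theorem ybarDegree_add_le_of_mem_support_iterD {k : ℕ} (vs : Fin k → Fin n ⊕ Fin n) {f : A n}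
    {m : Fin n ⊕ Fin n →₀ ℕ} (h : m ∈ (iterD vs f).support) :
    ∑ i : Fin n, m (Sum.inr i) + ∑ j, ybarWeight (vs j) ≤ degYb f := by
  have := weight_add_le_weightedTotalDegree_of_mem_support_foldr_pderiv ybarWeight _ h
  rwa [List.map_ofFn, List.sum_ofFn, weight_ybarWeight, ← degYb_eq_weightedTotalDegree] at this

/-- Stated with `+ d` on the left rather than `D - d` on the right to avoid truncated subtraction. -/
noncomputable def ybarDegreeAddLE (d D : ℕ) : Submodule ℂ (A n) :=
  restrictSupport ℂ {m | ∑ i : Fin n, m (Sum.inr i) + d ≤ D}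

theorem wickTermc_mem_ybarDegreeAddLE {d k : ℕ} (hdk : d ≤ k) (c : ℂ) (f g : A n) :
    wickTermc c k f g ∈ ybarDegreeAddLE d (degYb f + degYb g) := by
  refine Submodule.smul_mem _ _ (Submodule.sum_mem _ fun t _ => ?_)
  intro m hm
  obtain ⟨a, ha, b, hb, rfl⟩ := Finset.mem_add.mp (support_mul _ _ hm)
  have hf := ybarDegree_add_le_of_mem_support_iterD _ ha
  have hg := ybarDegree_add_le_of_mem_support_iterD _ hb
  simp only [ybarWeight, Sum.elim_inl, Sum.elim_inr, Pi.zero_apply, Pi.one_apply,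
    Finset.sum_const_zero, Finset.sum_const, Finset.card_univ, Fintype.card_fin,
    smul_eq_mul, mul_one] at hf hg
  simp only [Set.mem_ofPred_eq, Finsupp.coe_add, Pi.add_apply, Finset.sum_add_distrib]
  omega

theorem wickTermc_eq_zero_of_totalDegree_lt (c : ℂ) {k : ℕ} {f : A n} (g : A n)
    (h : f.totalDegree < k) : wickTermc c k f g = 0 := by
  have hf : ∀ t : Fin k → Fin n, iterD (fun j => Sum.inl (t j)) f = 0 := fun t =>
    foldr_pderiv_eq_zero_of_totalDegree_lt _ (by simpa using h)
  simp [wickTermc, hf]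

theorem wickTermc_zero (c : ℂ) (f g : A n) : wickTermc c 0 f g = f * g := by
  simp [wickTermc, iterD]

theorem wickTermc_one (c : ℂ) (f g : A n) :
    wickTermc c 1 f g = c • ∑ i : Fin n, pderiv (Sum.inl i) f * pderiv (Sum.inr i) g := by
  rw [wickTermc, Nat.factorial_one, Nat.cast_one, inv_one, pow_one, mul_one]
  congr 1
  exact Fintype.sum_equiv (Equiv.funUnique (Fin 1) (Fin n)) _ _ fun t => by
    simp [iterD, List.ofFn_succ]

theorem wickc_eq_sum_range (c : ℂ) {f : A n} (g : A n) {N : ℕ} (hN : f.totalDegree < N) :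
    wickc c f g = ∑ k ∈ Finset.range N, wickTermc c k f g :=
  Finset.sum_subset (Finset.range_subset_range.mpr hN) fun k _ hk =>
    wickTermc_eq_zero_of_totalDegree_lt c g (by simpa using hk)

theorem wickc_sub_mul_eq_sum (c : ℂ) (f g : A n) :
    wickc c f g - f * g = ∑ k ∈ Finset.range f.totalDegree, wickTermc c (k + 1) f g := by
  rw [wickc, Finset.sum_range_succ', wickTermc_zero, add_sub_cancel_right]

theorem wickc_sub_wickc_sub_eq_sum (c : ℂ) (f g : A n) :
    wickc c f g - wickc c g f -
        c • ∑ i : Fin n, (pderiv (Sum.inl i) f * pderiv (Sum.inr i) g -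
          pderiv (Sum.inl i) g * pderiv (Sum.inr i) f) =
      ∑ k ∈ Finset.range (max f.totalDegree g.totalDegree),
        (wickTermc c (k + 2) f g - wickTermc c (k + 2) g f) := by
  rw [wickc_eq_sum_range c g (N := max f.totalDegree g.totalDegree + 2) (by omega),
    wickc_eq_sum_range c f (N := max f.totalDegree g.totalDegree + 2) (by omega),
    Finset.sum_range_succ', Finset.sum_range_succ', Finset.sum_range_succ',
    Finset.sum_range_succ', wickTermc_zero, wickTermc_zero, wickTermc_one, wickTermc_one,
    Finset.sum_sub_distrib, Finset.sum_sub_distrib, smul_sub, mul_comm g f]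
  abel

end Wick

theorem wickc_almost_commutative_general (n : ℕ) (c : ℂ) (f g : A n) :
    (∀ m ∈ (wickc c f g - f * g).support,
      (∑ i : Fin n, m (Sum.inr i)) + 1 ≤ degYb f + degYb g) ∧
    (∀ m ∈ (wickc c f g - wickc c g f -
        c • ∑ i : Fin n,
          (pderiv (Sum.inl i) f * pderiv (Sum.inr i) g -
            pderiv (Sum.inl i) g * pderiv (Sum.inr i) f)).support,
      (∑ i : Fin n, m (Sum.inr i)) + 2 ≤ degYb f + degYb g) := by
  have hfg : wickc c f g - f * g ∈ ybarDegreeAddLE 1 (degYb f + degYb g) := by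
    rw [wickc_sub_mul_eq_sum]
    exact Submodule.sum_mem _ fun k _ => wickTermc_mem_ybarDegreeAddLE (by omega) c f g
  have hcomm : wickc c f g - wickc c g f -
      c • ∑ i : Fin n, (pderiv (Sum.inl i) f * pderiv (Sum.inr i) g -
        pderiv (Sum.inl i) g * pderiv (Sum.inr i) f) ∈
      ybarDegreeAddLE 2 (degYb f + degYb g) := by
    rw [wickc_sub_wickc_sub_eq_sum]
    refine Submodule.sum_mem _ fun k _ =>
      Submodule.sub_mem _ (wickTermc_mem_ybarDegreeAddLE (by omega) c f g) ?_
    rw [add_comm (degYb f)]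
    exact wickTermc_mem_ybarDegreeAddLE (by omega) c g f
  exact ⟨fun m hm => hfg hm, fun m hm => hcomm hm⟩

theorem wickc_almost_commutative (n : ℕ) (hn : 1 ≤ n) (c : ℂ) (f g : A n) :
    (∀ m ∈ (wickc c f g - f * g).support,
      (∑ i : Fin n, m (Sum.inr i)) + 1 ≤ degYb f + degYb g) ∧
    (∀ m ∈ (wickc c f g - wickc c g f -
        c • ∑ i : Fin n,
          (pderiv (Sum.inl i) f * pderiv (Sum.inr i) g -
            pderiv (Sum.inl i) g * pderiv (Sum.inr i) f)).support,
      (∑ i : Fin n, m (Sum.inr i)) + 2 ≤ degYb f + degYb g) :=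
  wickc_almost_commutative_general n c f g

end Stmt8
end

section
/- Under the Bargmann–Fock representation, the ȳ-degree filtration corresponds to the order filtration of differential operators: for any c ∈ ℂ, if f ∈ A has ȳ-degree at most N, then for all polynomials h₀, h₁, …, h_N ∈ ℂ[z¹,…,zⁿ] the iterated commutator [⋯[[Φ_c(f), M_{h₀}], M_{h₁}], …, M_{h_N}] is the zero operator on ℂ[z¹,…,zⁿ], where M_h denotes the multiplication operator s ↦ h·s; i.e., Φ_c(f) is a differential operator of order at most N in the Grothendieck sense. -/
/-!
STATEMENT 12: Under the Bargmann–Fock representation, the ȳ-degree filtration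
corresponds to the order filtration of differential operators: for any c ∈ ℂ,
if f ∈ A has ȳ-degree at most N, then for all polynomials h₀, …, h_N the
iterated commutator [⋯[[Φ_c(f), M_{h₀}], M_{h₁}], …, M_{h_N}] is the zero
operator on ℂ[z¹,…,zⁿ], where M_h is the multiplication operator; i.e.,
Φ_c(f) is a differential operator of order at most N in the Grothendieck sense.
-/

namespace Stmt12

open MvPolynomial

/-- `A = ℂ[y¹,…,yⁿ,ȳ¹,…,ȳⁿ]`; `Sum.inl i` is `yⁱ` and `Sum.inr i` is `ȳⁱ`. -/
abbrev A (n : ℕ) : Type := MvPolynomial (Fin n ⊕ Fin n) ℂ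

/-- `ℂ[z¹,…,zⁿ]`. -/
abbrev Pz (n : ℕ) : Type := MvPolynomial (Fin n) ℂ

/-- The iterated partial derivative `∂^{|b|}/∂z^b` for a multi-index `b`. -/
noncomputable def dOp {n : ℕ} (b : Fin n → ℕ) : Module.End ℂ (Pz n) :=
  (List.finRange n).foldr
    (fun i L => ((pderiv i : Derivation ℂ (Pz n) (Pz n)).toLinearMap ^ b i) * L) 1

/-- The level-`c` Bargmann–Fock representation: the monomial `y^a ȳ^b` acts on
`s` by `(−c)^{|b|} ∂^{|b|}(z^a·s)/∂z^b`, extended ℂ-linearly in `f`. -/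
noncomputable def Phi {n : ℕ} (c : ℂ) (f : A n) : Module.End ℂ (Pz n) :=
  ∑ m ∈ f.support,
    (coeff m f * (-c) ^ (∑ i : Fin n, m (Sum.inr i))) •
      (dOp (fun i => m (Sum.inr i)) *
        LinearMap.mulLeft ℂ (∏ i : Fin n, (X i : Pz n) ^ m (Sum.inl i)))

/-!
Following Grothendieck, an operator `T` has order at most `0` when it commutes with every
multiplication operator `M_p`, and order at most `k + 1` when every commutator `⁅T, M_p⁆` has
order at most `k`; so `N + 1` successive commutators kill an operator of order at most `N`.
The Leibniz rule `⁅T₁ * T₂, M_p⁆ = ⁅T₁, M_p⁆ * T₂ + T₁ * ⁅T₂, M_p⁆` makes orders add under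
composition, and a derivation `D` has order at most `1` because `⁅D, M_p⁆ = M_{D p}`. As
`y^a ȳ^b` acts by `|b|` partial derivatives composed with a multiplication operator, `Φ_c(f)` has
order at most the `ȳ`-degree of `f`.
-/

attribute [local instance] LieRing.ofAssociativeRing LieAlgebra.ofAssociativeAlgebra

section Order

variable {ι E : Type*} [Ring E] (μ : ι → E)

/-- Grothendieck's order filtration on a ring `E` relative to the family `μ`, which plays the
role of the multiplication operators. -/
def IsDiffOp : ℕ → E → Prop
  | 0, T => ∀ i, ⁅T, μ i⁆ = 0
  | k + 1, T => ∀ i, IsDiffOp k ⁅T, μ i⁆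

variable {μ}

theorem isDiffOp_zero (k : ℕ) : IsDiffOp μ k 0 := by
  induction k with
  | zero => intro i; exact zero_lie _
  | succ k ih => intro i; rw [zero_lie]; exact ih

theorem IsDiffOp.add {k : ℕ} {T T' : E} (hT : IsDiffOp μ k T) (hT' : IsDiffOp μ k T') :
    IsDiffOp μ k (T + T') := by
  induction k generalizing T T' with
  | zero => intro i; rw [add_lie, hT i, hT' i, add_zero]
  | succ k ih => intro i; rw [add_lie]; exact ih (hT i) (hT' i)

theorem IsDiffOp.smul {R : Type*} [CommRing R] [Algebra R E] {k : ℕ} {T : E}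
    (hT : IsDiffOp μ k T) (a : R) : IsDiffOp μ k (a • T) := by
  induction k generalizing T with
  | zero => intro i; rw [smul_lie, hT i, smul_zero]
  | succ k ih => intro i; rw [smul_lie]; exact ih (hT i)

theorem IsDiffOp.succ {k : ℕ} {T : E} (hT : IsDiffOp μ k T) : IsDiffOp μ (k + 1) T := by
  induction k generalizing T with
  | zero => intro i; rw [hT i]; exact isDiffOp_zero 0
  | succ k ih => intro i; exact ih (hT i)

theorem IsDiffOp.mono {k m : ℕ} {T : E} (hT : IsDiffOp μ k T) (hkm : k ≤ m) :
    IsDiffOp μ m T := by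
  induction m, hkm using Nat.le_induction with
  | base => exact hT
  | succ m _ ih => exact ih.succ

theorem mul_lie_eq (T T' x : E) : ⁅T * T', x⁆ = ⁅T, x⁆ * T' + T * ⁅T', x⁆ := by
  simp only [Ring.lie_def]
  noncomm_ring

theorem IsDiffOp.mul {k l : ℕ} {T T' : E} (hT : IsDiffOp μ k T) (hT' : IsDiffOp μ l T') :
    IsDiffOp μ (k + l) (T * T') := by
  induction h : k + l generalizing k l T T' with
  | zero =>
    obtain ⟨rfl, rfl⟩ : k = 0 ∧ l = 0 := by omega
    intro i
    rw [mul_lie_eq, hT i, hT' i, zero_mul, mul_zero, add_zero]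
  | succ m ih =>
    intro i
    rw [mul_lie_eq]
    refine IsDiffOp.add ?_ ?_
    · cases k with
      | zero => rw [hT i, zero_mul]; exact isDiffOp_zero m
      | succ k => exact ih (hT i) hT' (by omega)
    · cases l with
      | zero => rw [hT' i, mul_zero]; exact isDiffOp_zero m
      | succ l => exact ih hT (hT' i) (by omega)

theorem isDiffOp_zero_of_commute {T : E} (hT : ∀ i, Commute T (μ i)) : IsDiffOp μ 0 T :=
  fun i => (hT i).lie_eq

theorem isDiffOp_one : IsDiffOp μ 0 (1 : E) :=
  isDiffOp_zero_of_commute fun i => Commute.one_left (μ i)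

theorem IsDiffOp.pow {k : ℕ} {T : E} (hT : IsDiffOp μ k T) (m : ℕ) :
    IsDiffOp μ (m * k) (T ^ m) := by
  induction m with
  | zero => rw [pow_zero, zero_mul]; exact isDiffOp_one
  | succ m ih => rw [pow_succ, Nat.succ_mul]; exact ih.mul hT

theorem isDiffOp_foldr_mul {κ : Type*} {F : κ → E} {ord : κ → ℕ}
    (hF : ∀ j, IsDiffOp μ (ord j) (F j)) (l : List κ) :
    IsDiffOp μ (l.map ord).sum (l.foldr (fun j L => F j * L) 1) := by
  induction l with
  | nil => exact isDiffOp_one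
  | cons j l ih => exact (hF j).mul ih

theorem IsDiffOp.foldl_lie_eq_zero {N : ℕ} {T : E} (hT : IsDiffOp μ N T) {l : List ι}
    (hl : l.length = N + 1) : l.foldl (fun T i => ⁅T, μ i⁆) T = 0 := by
  induction N generalizing T l with
  | zero =>
    obtain ⟨i, rfl⟩ := List.length_eq_one_iff.mp hl
    exact hT i
  | succ N ih =>
    obtain ⟨i, l, rfl⟩ := List.exists_cons_of_length_eq_add_one hl
    exact ih (hT i) (by simpa using hl)

end Order

section Operators

variable {R S : Type*} [CommRing R] [CommRing S] [Algebra R S]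

theorem isDiffOp_mulLeft (q : S) : IsDiffOp (LinearMap.mulLeft R) 0 (LinearMap.mulLeft R q) :=
  isDiffOp_zero_of_commute fun p => LinearMap.ext fun s => mul_left_comm q p s

theorem derivation_lie_mulLeft (D : Derivation R S S) (p : S) :
    ⁅(D : Module.End R S), LinearMap.mulLeft R p⁆ = LinearMap.mulLeft R (D p) := by
  ext s
  simp only [Ring.lie_def, LinearMap.sub_apply, Module.End.mul_apply, LinearMap.mulLeft_apply,
    Derivation.coeFn_coe, D.leibniz, smul_eq_mul, add_sub_cancel_left]
  ring

theorem isDiffOp_derivation (D : Derivation R S S) :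
    IsDiffOp (LinearMap.mulLeft R) 1 (D : Module.End R S) := fun p => by
  rw [derivation_lie_mulLeft]
  exact isDiffOp_mulLeft _

end Operators

theorem isDiffOp_dOp {n : ℕ} (b : Fin n → ℕ) :
    IsDiffOp (LinearMap.mulLeft ℂ) (∑ i, b i) (dOp b) := by
  rw [Fin.sum_univ_def]
  exact isDiffOp_foldr_mul (fun i => by simpa using (isDiffOp_derivation (pderiv i)).pow (b i)) _

theorem isDiffOp_Phi {n : ℕ} (c : ℂ) {N : ℕ} {f : A n}
    (hf : ∀ m ∈ f.support, ∑ i : Fin n, m (Sum.inr i) ≤ N) :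
    IsDiffOp (LinearMap.mulLeft ℂ) N (Phi c f) :=
  Finset.sum_induction _ (IsDiffOp _ N) (fun _ _ => IsDiffOp.add) (isDiffOp_zero N)
    fun m hm => (((isDiffOp_dOp _).mono (hf m hm)).mul (isDiffOp_mulLeft _)).smul _

theorem bargmann_fock_order_filtration_general (n : ℕ) (c : ℂ) (N : ℕ)
    (f : A n) (hf : ∀ m ∈ f.support, ∑ i : Fin n, m (Sum.inr i) ≤ N)
    (h : Fin (N + 1) → Pz n) :
    (List.ofFn h).foldl
      (fun T p => T * LinearMap.mulLeft ℂ p - LinearMap.mulLeft ℂ p * T)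
      (Phi c f) = 0 :=
  (isDiffOp_Phi c hf).foldl_lie_eq_zero List.length_ofFn

theorem bargmann_fock_order_filtration (n : ℕ) (hn : 1 ≤ n) (c : ℂ) (N : ℕ)
    (f : A n) (hf : ∀ m ∈ f.support, ∑ i : Fin n, m (Sum.inr i) ≤ N)
    (h : Fin (N + 1) → Pz n) :
    (List.ofFn h).foldl
      (fun T p => T * LinearMap.mulLeft ℂ p - LinearMap.mulLeft ℂ p * T)
      (Phi c f) = 0 :=
  bargmann_fock_order_filtration_general n c N f hf h

end Stmt12
end

section
/- The operator e^S intertwines the Moyal–Weyl and Wick products: the ℂ[ħ]-linear map e^S := Σ_{m≥0} S^m/m! on A[ħ], where S = (ħ/2)·Σ_{i=1}^{n} ∂²/∂yⁱ∂ȳⁱ (the sum defining e^S is finite on each polynomial since S lowers total degree in the variables y, ȳ by 2), is a linear bijection with inverse e^{−S}, and it satisfies e^S(f ⋆_MW g) = e^S(f) ⋆ e^S(g) for all f, g ∈ A[ħ]; hence (A[ħ], ⋆_MW) and (A[ħ], ⋆) are isomorphic algebras. -/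
/-!
STATEMENT 13: The operator e^S intertwines the Moyal–Weyl and Wick products:
the ℂ[ħ]-linear map e^S := Σ_{m≥0} S^m/m! on A[ħ], where
S = (ħ/2)·Σᵢ ∂²/∂yⁱ∂ȳⁱ (the sum defining e^S is finite on each polynomial
since S lowers total degree in y, ȳ by 2), is a linear bijection with inverse
e^{−S}, and it satisfies e^S(f ⋆_MW g) = e^S(f) ⋆ e^S(g) for all f, g ∈ A[ħ];
hence (A[ħ], ⋆_MW) and (A[ħ], ⋆) are isomorphic algebras.
-/

namespace Stmt13

open MvPolynomial

/-- Variables: `Sum.inl (Sum.inl i)` is `yⁱ`, `Sum.inl (Sum.inr i)` is `ȳⁱ`,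
and `Sum.inr ()` is the formal variable `ħ`. -/
abbrev V (n : ℕ) : Type := (Fin n ⊕ Fin n) ⊕ Unit

/-- `A[ħ] = ℂ[y¹,…,yⁿ,ȳ¹,…,ȳⁿ][ħ]`. -/
abbrev W (n : ℕ) : Type := MvPolynomial (V n) ℂ

/-- `A = ℂ[y¹,…,yⁿ,ȳ¹,…,ȳⁿ]` (no `ħ`); `Sum.inl i` is `yⁱ`, `Sum.inr i` is `ȳⁱ`. -/
abbrev A (n : ℕ) : Type := MvPolynomial (Fin n ⊕ Fin n) ℂ

/-- The variable `ħ`. -/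
noncomputable def hbar (n : ℕ) : W n := X (Sum.inr ())

/-- The variable `yⁱ`. -/
def yv {n : ℕ} (i : Fin n) : V n := Sum.inl (Sum.inl i)

/-- The variable `ȳⁱ`. -/
def yb {n : ℕ} (i : Fin n) : V n := Sum.inl (Sum.inr i)

/-- The canonical inclusion `A → A[ħ]`. -/
noncomputable def emb {n : ℕ} : A n →ₐ[ℂ] W n := rename Sum.inl

/-- Iterated partial derivative along a tuple of variables. -/
noncomputable def iterD {n k : ℕ} (vs : Fin k → V n) (f : W n) : W n :=
  (List.ofFn vs).foldr (fun v acc => pderiv v acc) f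

/-- The `k`-th term `(1/k!) Σ_{i₁,…,i_k} (∂ᵏf/∂y^{i₁}⋯∂y^{i_k})·(∂ᵏg/∂ȳ^{i₁}⋯∂ȳ^{i_k})`
in the Wick product. -/
noncomputable def wickTerm {n : ℕ} (k : ℕ) (f g : W n) : W n :=
  ((k.factorial : ℂ))⁻¹ •
    ∑ t : Fin k → Fin n,
      iterD (fun j => yv (t j)) f * iterD (fun j => yb (t j)) g

/-- The fiberwise Wick product `f ⋆ g = Σ_{k≥0} ħᵏ · (k-th term)`.  The sum is
finite: the `k`-fold `y`-derivative of `f` vanishes once `k > totalDegree f`,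
so truncating the range at `totalDegree f + 1` loses nothing. -/
noncomputable def wick {n : ℕ} (f g : W n) : W n :=
  ∑ k ∈ Finset.range (f.totalDegree + 1), hbar n ^ k * wickTerm k f g

/-- The operator `S = (ħ/2)·Σᵢ ∂²/∂yⁱ∂ȳⁱ`. -/
noncomputable def Sop {n : ℕ} (f : W n) : W n :=
  (2 : ℂ)⁻¹ • (hbar n * ∑ i : Fin n, pderiv (yv i) (pderiv (yb i) f))

/-- `e^S = Σ_{m≥0} S^m/m!`; the sum is finite on each polynomial since `S`
lowers the total degree in the variables `y, ȳ` by 2, so `S^m f = 0` once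
`m > totalDegree f` and truncating the range loses nothing. -/
noncomputable def expS {n : ℕ} (f : W n) : W n :=
  ∑ m ∈ Finset.range (f.totalDegree + 1), ((m.factorial : ℂ))⁻¹ • Sop^[m] f

/-- `e^{−S} = Σ_{m≥0} (−S)^m/m!`. -/
noncomputable def expNegS {n : ℕ} (f : W n) : W n :=
  ∑ m ∈ Finset.range (f.totalDegree + 1),
    ((-1 : ℂ) ^ m * ((m.factorial : ℂ))⁻¹) • Sop^[m] f

/-- The `(k,l)`-term of the Moyal–Weyl product:
`(1/(k!·l!)) Σ_{i₁,…,i_k} Σ_{j₁,…,j_l}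
(∂^{k+l}f/∂y^{i}⋯∂ȳ^{j}⋯)·(∂^{k+l}g/∂ȳ^{i}⋯∂y^{j}⋯)`. -/
noncomputable def mwTerm {n : ℕ} (k l : ℕ) (f g : W n) : W n :=
  ((k.factorial : ℂ) * (l.factorial : ℂ))⁻¹ •
    ∑ t : Fin k → Fin n, ∑ u : Fin l → Fin n,
      iterD (fun j => yv (t j)) (iterD (fun j => yb (u j)) f) *
        iterD (fun j => yb (t j)) (iterD (fun j => yv (u j)) g)

/-- The Moyal–Weyl product
`f ⋆_MW g = Σ_{k,l≥0} (ħ/2)^{k+l}·(−1)^l·(k,l)-term`; all nonzero terms have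
`k + l ≤ totalDegree f`, so the truncation loses nothing. -/
noncomputable def moyal {n : ℕ} (f g : W n) : W n :=
  ∑ k ∈ Finset.range (f.totalDegree + 1), ∑ l ∈ Finset.range (f.totalDegree + 1),
    ((-1 : ℂ) ^ l) • (((2 : ℂ)⁻¹ • hbar n) ^ (k + l) * mwTerm k l f g)

end Stmt13

/-!
On `T = A[ħ] ⊗ A[ħ]` with multiplication `μ`, the Leibniz rule gives
`S ∘ μ = μ ∘ L` with `L = S ⊗ 1 + 1 ⊗ S + (ħ/2)(P + Q)`, where `P = Σᵢ ∂_{yⁱ} ⊗ ∂_{ȳⁱ}` and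
`Q = Σᵢ ∂_{ȳⁱ} ⊗ ∂_{yⁱ}`. The Moyal–Weyl product is `μ ∘ exp((ħ/2)(P - Q))` and the Wick
product is `μ ∘ exp(ħ P)`. All these operators commute and lower the degree in `y, ȳ`, so their
exponentials are finite sums and satisfy `exp (a + b) = exp a ∘ exp b`. Hence
`e^S (f ⋆_MW g) = μ (exp L (exp((ħ/2)(P - Q)) (f ⊗ g)))
= μ (exp(ħ P) (exp(S ⊗ 1 + 1 ⊗ S) (f ⊗ g))) = e^S f ⋆ e^S g`; and `e^S ∘ e^{-S} = exp 0 = 1`.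
-/
open Finset TensorProduct

section SumRange

variable {M : Type*} [AddCommMonoid M]

theorem sum_range_eq_sum_range_of_eq_zero {u : ℕ → M} {K₁ K₂ : ℕ}
    (h₁ : ∀ k ≥ K₁, u k = 0) (h₂ : ∀ k ≥ K₂, u k = 0) :
    ∑ k ∈ range K₁, u k = ∑ k ∈ range K₂, u k := by
  rcases le_total K₁ K₂ with h | h
  · exact (eventually_constant_sum h₁ h).symm
  · exact eventually_constant_sum h₂ h

theorem sum_range_sum_range_eq_of_eq_zero {g : ℕ → ℕ → M} {N K : ℕ}
    (hg : ∀ k l, N ≤ k + l → g k l = 0) (hK : N ≤ K) :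
    ∑ k ∈ range K, ∑ l ∈ range K, g k l = ∑ k ∈ range N, ∑ l ∈ range (N - k), g k l := by
  have hrow : ∀ k, ∑ l ∈ range K, g k l = ∑ l ∈ range (N - k), g k l := fun k =>
    sum_range_eq_sum_range_of_eq_zero (fun l hl => hg k l (by omega))
      (fun l hl => hg k l (by omega))
  simp only [hrow]
  exact eventually_constant_sum (fun k hk => by simp [Nat.sub_eq_zero_of_le hk]) hK

end SumRange

section ExpTrunc

variable {𝕜 M M' : Type*} [Field 𝕜] [AddCommGroup M] [Module 𝕜 M] [AddCommGroup M']
  [Module 𝕜 M']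

noncomputable def expTrunc (A : Module.End 𝕜 M) (K : ℕ) : Module.End 𝕜 M :=
  ∑ m ∈ range K, (m.factorial : 𝕜)⁻¹ • A ^ m

theorem expTrunc_apply (A : Module.End 𝕜 M) (K : ℕ) (x : M) :
    expTrunc A K x = ∑ m ∈ range K, (m.factorial : 𝕜)⁻¹ • (A ^ m) x := by
  simp [expTrunc, LinearMap.sum_apply]

theorem expTrunc_apply_congr {A : Module.End 𝕜 M} {x : M} {K₁ K₂ : ℕ}
    (h₁ : (A ^ K₁) x = 0) (h₂ : (A ^ K₂) x = 0) : expTrunc A K₁ x = expTrunc A K₂ x := by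
  simp only [expTrunc_apply]
  exact sum_range_eq_sum_range_of_eq_zero
    (fun m hm => by rw [Module.End.pow_map_zero_of_le hm h₁, smul_zero])
    (fun m hm => by rw [Module.End.pow_map_zero_of_le hm h₂, smul_zero])

theorem expTrunc_zero_succ (K : ℕ) : expTrunc (0 : Module.End 𝕜 M) (K + 1) = 1 := by
  rw [expTrunc, sum_range_succ']
  simp

theorem expTrunc_comp_of_comp_eq {φ : M →ₗ[𝕜] M'} {A : Module.End 𝕜 M}
    {B : Module.End 𝕜 M'} (h : B ∘ₗ φ = φ ∘ₗ A) (K : ℕ) :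
    expTrunc B K ∘ₗ φ = φ ∘ₗ expTrunc A K := by
  ext x
  have hpow (m : ℕ) : (B ^ m) (φ x) = φ ((A ^ m) x) :=
    LinearMap.congr_fun (Module.End.commute_pow_left_of_commute h m) x
  simp [expTrunc_apply, hpow]

theorem expTrunc_map_one_tmul {N : Type*} [AddCommGroup N] [Module 𝕜 N] (A : Module.End 𝕜 M)
    (K : ℕ) (x : M) (y : N) :
    expTrunc (TensorProduct.map A 1) K (x ⊗ₜ y) = expTrunc A K x ⊗ₜ y := by
  simp [expTrunc_apply, TensorProduct.map_pow, sum_tmul, smul_tmul']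

theorem expTrunc_one_map_tmul {N : Type*} [AddCommGroup N] [Module 𝕜 N] (B : Module.End 𝕜 N)
    (K : ℕ) (x : M) (y : N) :
    expTrunc (TensorProduct.map 1 B) K (x ⊗ₜ y) = x ⊗ₜ expTrunc B K y := by
  simp [expTrunc_apply, TensorProduct.map_pow, tmul_sum]

theorem expTrunc_apply_expTrunc_apply (A B : Module.End 𝕜 M) (K : ℕ) (x : M) :
    expTrunc A K (expTrunc B K x) = ∑ k ∈ range K, ∑ l ∈ range K,
      ((k.factorial : 𝕜)⁻¹ * (l.factorial : 𝕜)⁻¹) • (A ^ k * B ^ l) x := by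
  rw [expTrunc_apply]
  refine sum_congr rfl fun k _ => ?_
  rw [expTrunc_apply, map_sum, smul_sum]
  refine sum_congr rfl fun l _ => ?_
  rw [map_smul, smul_smul, Module.End.mul_apply]

theorem expTrunc_add_apply [CharZero 𝕜] {A B : Module.End 𝕜 M} (hAB : Commute A B)
    {x : M} {N K : ℕ} (hx : ∀ k l, N ≤ k + l → (A ^ k * B ^ l) x = 0) (hK : N ≤ K) :
    expTrunc (A + B) K x = expTrunc A K (expTrunc B K x) := by
  set g : ℕ → ℕ → M := fun k l =>
    ((k.factorial : 𝕜)⁻¹ * (l.factorial : 𝕜)⁻¹) • (A ^ k * B ^ l) x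
  have hg : ∀ k l, N ≤ k + l → g k l = 0 := fun k l h => by simp only [g, hx k l h, smul_zero]
  have hbinom : ∀ m, (m.factorial : 𝕜)⁻¹ • ((A + B) ^ m) x
      = ∑ k ∈ range (m + 1), g k (m - k) := by
    intro m
    rw [hAB.add_pow, LinearMap.sum_apply, smul_sum]
    refine sum_congr rfl fun k hk => ?_
    have hkm : k ≤ m := Nat.lt_succ_iff.1 (mem_range.1 hk)
    rw [Module.End.mul_apply, Module.End.natCast_apply, map_nsmul, ← Nat.cast_smul_eq_nsmul 𝕜,
      smul_smul, Nat.cast_choose 𝕜 hkm]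
    have : (m.factorial : 𝕜) ≠ 0 := Nat.cast_ne_zero.2 m.factorial_ne_zero
    congr 1
    field_simp
  rw [expTrunc_apply_expTrunc_apply, sum_range_sum_range_eq_of_eq_zero hg hK, expTrunc_apply,
    sum_congr rfl fun m _ => hbinom m, ← sum_range_diag_flip]
  exact eventually_constant_sum
    (fun m hm => sum_eq_zero fun k hk => hg k (m - k) (by simp at hk; omega)) hK

end ExpTrunc

section Filtration

variable {R M N : Type*} [CommSemiring R] [AddCommMonoid M] [Module R M]
  [AddCommMonoid N] [Module R N]

-- With `F 0 = ⊥`, truncated subtraction forces `A` to vanish on `F d` for `d ≤ p`.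
def LowersBy (F : ℕ → Submodule R M) (p : ℕ) (A : Module.End R M) : Prop :=
  ∀ d, F d ≤ (F (d - p)).comap A

namespace LowersBy

variable {F : ℕ → Submodule R M} {p q : ℕ} {A B : Module.End R M}

theorem one : LowersBy F 0 (1 : Module.End R M) := fun _ _ hx => hx

theorem add (hA : LowersBy F p A) (hB : LowersBy F p B) : LowersBy F p (A + B) :=
  fun d _ hx => Submodule.add_mem _ (hA d hx) (hB d hx)

theorem smul (c : R) (hA : LowersBy F p A) : LowersBy F p (c • A) :=
  fun d _ hx => Submodule.smul_mem _ c (hA d hx)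

theorem sum {ι : Type*} (s : Finset ι) {A : ι → Module.End R M}
    (h : ∀ i ∈ s, LowersBy F p (A i)) : LowersBy F p (∑ i ∈ s, A i) := fun d x hx => by
  rw [Submodule.mem_comap, LinearMap.sum_apply]
  exact Submodule.sum_mem _ fun i hi => h i hi d hx

theorem mul (hA : LowersBy F p A) (hB : LowersBy F q B) : LowersBy F (p + q) (A * B) :=
  fun d _ hx => by
    have := hA _ (hB d hx)
    rwa [Nat.sub_sub, add_comm q] at this

theorem pow (hA : LowersBy F p A) (k : ℕ) : LowersBy F (p * k) (A ^ k) := by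
  induction k with
  | zero => exact one
  | succ k ih => rw [pow_succ', Nat.mul_succ, add_comm]; exact hA.mul ih

theorem mono (hF : Monotone F) (hA : LowersBy F p A) (h : q ≤ p) : LowersBy F q A :=
  fun d _ hx => hF (by omega) (hA d hx)

theorem pow_mul_pow_apply_eq_zero (hF : F 0 = ⊥) (hA : LowersBy F (p + 1) A)
    (hB : LowersBy F (q + 1) B) {x : M} {N k l : ℕ} (hx : x ∈ F N) (h : N ≤ k + l) :
    (A ^ k * B ^ l) x = 0 := by
  have := (hA.pow k).mul (hB.pow l) N hx
  rwa [Nat.sub_eq_zero_of_le (by nlinarith), hF, Submodule.comap_bot, LinearMap.mem_ker] at this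

end LowersBy

def tensorFiltration (F : ℕ → Submodule R M) (G : ℕ → Submodule R N) (d : ℕ) :
    Submodule R (M ⊗[R] N) :=
  Submodule.span R {z | ∃ i j, i + j ≤ d ∧ ∃ m ∈ F i, ∃ n ∈ G j, m ⊗ₜ n = z}

variable {F : ℕ → Submodule R M} {G : ℕ → Submodule R N}

theorem tmul_mem_tensorFiltration {i j d : ℕ} {m : M} {n : N} (hm : m ∈ F i) (hn : n ∈ G j)
    (h : i + j ≤ d) : m ⊗ₜ n ∈ tensorFiltration F G d :=
  Submodule.subset_span ⟨i, j, h, m, hm, n, hn, rfl⟩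

theorem tensorFiltration_zero (hF : F 0 = ⊥) : tensorFiltration F G 0 = ⊥ := by
  rw [tensorFiltration, Submodule.span_eq_bot]
  rintro _ ⟨i, j, hij, m, hm, n, -, rfl⟩
  rw [Nat.eq_zero_of_add_eq_zero_right (Nat.le_zero.1 hij), hF, Submodule.mem_bot] at hm
  rw [hm, zero_tmul]

theorem tensorFiltration_mono : Monotone (tensorFiltration F G) := fun _ _ hd =>
  Submodule.span_mono fun _ ⟨i, j, hij, hz⟩ => ⟨i, j, hij.trans hd, hz⟩

theorem LowersBy.map (hF : F 0 = ⊥) (hG : G 0 = ⊥) {p q : ℕ} {a : Module.End R M}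
    {b : Module.End R N} (ha : LowersBy F p a) (hb : LowersBy G q b) :
    LowersBy (tensorFiltration F G) (p + q) (TensorProduct.map a b) := by
  intro d
  rw [tensorFiltration, Submodule.span_le]
  rintro _ ⟨i, j, hij, m, hm, n, hn, rfl⟩
  have ham := ha i hm
  have hbn := hb j hn
  simp only [Submodule.mem_comap, SetLike.mem_coe, map_tmul] at ham hbn ⊢
  rcases lt_or_ge i p with hi | hi
  · rw [Nat.sub_eq_zero_of_le hi.le, hF, Submodule.mem_bot] at ham
    rw [ham, zero_tmul]; exact zero_mem _
  rcases lt_or_ge j q with hj | hj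
  · rw [Nat.sub_eq_zero_of_le hj.le, hG, Submodule.mem_bot] at hbn
    rw [hbn, tmul_zero]; exact zero_mem _
  exact tmul_mem_tensorFiltration ham hbn (by omega)

end Filtration

section FilteredExp

variable {𝕜 M : Type*} [Field 𝕜] [AddCommGroup M] [Module 𝕜 M] {F : ℕ → Submodule 𝕜 M}
  {p : ℕ} {A : Module.End 𝕜 M}

namespace LowersBy

theorem neg (hA : LowersBy F p A) : LowersBy F p (-A) := by
  simpa using hA.smul (-1 : 𝕜)

theorem pow_apply_eq_zero (hF : F 0 = ⊥) (hA : LowersBy F (p + 1) A) {x : M} {N k : ℕ}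
    (hx : x ∈ F N) (h : N ≤ k) : (A ^ k) x = 0 := by
  simpa using hA.pow_mul_pow_apply_eq_zero hF hA hx (l := 0) h

theorem expTrunc_apply_mem (hF : Monotone F) (hA : LowersBy F p A) (K : ℕ) {x : M} {d : ℕ}
    (hx : x ∈ F d) : _root_.expTrunc A K x ∈ F d := by
  rw [expTrunc_apply]
  exact Submodule.sum_mem _ fun m _ =>
    Submodule.smul_mem _ _ (hF (Nat.sub_le _ _) (hA.pow m d hx))

theorem expTrunc_add_apply [CharZero 𝕜] (hF : F 0 = ⊥) {q : ℕ} {B : Module.End 𝕜 M}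
    (hAB : Commute A B) (hA : LowersBy F (p + 1) A) (hB : LowersBy F (q + 1) B) {x : M} {K : ℕ}
    (hx : x ∈ F K) : _root_.expTrunc (A + B) K x = _root_.expTrunc A K (_root_.expTrunc B K x) :=
  _root_.expTrunc_add_apply hAB (fun _ _ h => hA.pow_mul_pow_apply_eq_zero hF hB hx h) le_rfl

theorem expTrunc_apply_expTrunc_neg_apply [CharZero 𝕜] (hF : F 0 = ⊥)
    (hA : LowersBy F (p + 1) A) {x : M} {K : ℕ} (hx : x ∈ F K) :
    _root_.expTrunc A K (_root_.expTrunc (-A) K x) = x := by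
  rw [← hA.expTrunc_add_apply hF (Commute.refl A).neg_right hA.neg hx, add_neg_cancel]
  cases K with
  | zero => rw [hF, Submodule.mem_bot] at hx; rw [hx, map_zero]
  | succ K => rw [expTrunc_zero_succ, Module.End.one_apply]

end LowersBy

end FilteredExp

theorem MvPolynomial.pderiv_pderiv_comm_s13 {σ R : Type*} [CommSemiring R] (i j : σ)
    (f : MvPolynomial σ R) :
    pderiv i (pderiv j f) = pderiv j (pderiv i f) := by
  classical
  induction f using MvPolynomial.induction_on' with
  | monomial s a =>
    simp only [pderiv_monomial, tsub_right_comm (a := s) (b := Finsupp.single i 1)]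
    by_cases hij : i = j
    · subst hij; rfl
    · congr 1
      simp only [Finsupp.coe_tsub, Pi.sub_apply, Finsupp.single_eq_of_ne hij,
        Finsupp.single_eq_of_ne (Ne.symm hij), tsub_zero]
      ring
  | add p q hp hq => simp [hp, hq]

section Weight

open MvPolynomial

variable {σ : Type*} (R : Type*) [CommSemiring R] (w : σ → ℕ)

noncomputable def weightedDegreeLT (d : ℕ) : Submodule R (MvPolynomial σ R) :=
  restrictSupport R {s | s.weight w < d}

variable {R}

theorem weightedDegreeLT_zero : weightedDegreeLT R w 0 = ⊥ := by
  refine (Submodule.eq_bot_iff _).2 fun f hf => ?_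
  rw [← support_eq_empty, Finset.eq_empty_iff_forall_notMem]
  exact fun s hs => Nat.not_lt_zero _ (hf hs)

theorem weightedDegreeLT_mono : Monotone (weightedDegreeLT R w) :=
  fun _ _ hd => restrictSupport_mono R fun _ hs => lt_of_lt_of_le hs hd

variable {w}

theorem lowersBy_weightedDegreeLT_of_monomial {p : ℕ} {A : Module.End R (MvPolynomial σ R)}
    (h : ∀ d s, s.weight w < d → A (monomial s 1) ∈ weightedDegreeLT R w (d - p)) :
    LowersBy (weightedDegreeLT R w) p A := fun d => by
  rw [weightedDegreeLT, restrictSupport_eq_span, Submodule.span_le, Set.image_subset_iff]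
  exact fun s hs => h d s hs

theorem lowersBy_pderiv (i : σ) :
    LowersBy (weightedDegreeLT R w) (w i) (pderiv i).toLinearMap := by
  classical
  refine lowersBy_weightedDegreeLT_of_monomial fun d s hs => ?_
  rw [Derivation.coeFn_coe, pderiv_monomial, weightedDegreeLT,
    monomial_mem_restrictSupport]
  by_cases hsi : s i = 0
  · exact Or.inr (by simp [hsi])
  · have := Finsupp.weight_sub_single_add (w := w) hsi
    exact Or.inl (show Finsupp.weight w _ < _ by omega)

theorem lowersBy_mulLeft_X {i : σ} (hi : w i = 0) :
    LowersBy (weightedDegreeLT R w) 0 (LinearMap.mulLeft R (X i)) := by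
  refine lowersBy_weightedDegreeLT_of_monomial fun d s hs => ?_
  rw [LinearMap.mulLeft_apply, X, monomial_mul, one_mul, weightedDegreeLT,
    monomial_mem_restrictSupport]
  exact Or.inl (by simpa [Finsupp.weight_single, hi] using hs)

theorem mem_weightedDegreeLT_totalDegree (hw : ∀ i, w i ≤ 1) (f : MvPolynomial σ R) :
    f ∈ weightedDegreeLT R w (f.totalDegree + 1) := fun s hs => by
  refine Nat.lt_succ_of_le (le_trans ?_ (le_totalDegree hs))
  rw [Finsupp.weight_apply]
  exact Finset.sum_le_sum fun i _ => by simpa using Nat.mul_le_mul_left (s i) (hw i)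

end Weight

theorem Algebra.commute_of_mem_adjoin_of_pairwise {R A : Type*} [CommSemiring R] [Semiring A]
    [Algebra R A] {s : Set A} (hs : ∀ a ∈ s, ∀ b ∈ s, Commute a b) {a b : A}
    (ha : a ∈ Algebra.adjoin R s) (hb : b ∈ Algebra.adjoin R s) : Commute a b :=
  Algebra.commute_of_mem_adjoin_of_forall_mem_commute hb fun c hc =>
    (Algebra.commute_of_mem_adjoin_of_forall_mem_commute ha fun d hd => hs c hc d hd).symm

namespace Stmt13

open MvPolynomial TensorProduct Finset

variable {n : ℕ}

theorem iterD_zero (vs : Fin 0 → V n) (f : W n) : iterD vs f = f := rfl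

theorem iterD_succ {k : ℕ} (vs : Fin (k + 1) → V n) (f : W n) :
    iterD vs f = pderiv (vs 0) (iterD (fun j => vs j.succ) f) := by
  simp [iterD, List.ofFn_succ]

def yWeight : V n → ℕ := Sum.elim (fun _ => 1) (fun _ => 0)

noncomputable abbrev FW (n : ℕ) : ℕ → Submodule ℂ (W n) := weightedDegreeLT ℂ (yWeight (n := n))

theorem mem_FW_totalDegree (f : W n) : f ∈ FW n (f.totalDegree + 1) :=
  mem_weightedDegreeLT_totalDegree (fun v => by cases v <;> simp [yWeight]) f

theorem FW_zero : FW n 0 = ⊥ := weightedDegreeLT_zero _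

theorem iterD_mem_FW {k d : ℕ} {vs : Fin k → V n} (hvs : ∀ j, yWeight (vs j) = 1) {f : W n}
    (hf : f ∈ FW n d) : iterD vs f ∈ FW n (d - k) := by
  induction k with
  | zero => exact hf
  | succ k ih =>
    rw [iterD_succ]
    have := lowersBy_pderiv (vs 0) _ (ih fun j => hvs j.succ)
    rwa [hvs 0, Nat.sub_sub] at this

theorem iterD_eq_zero {k N : ℕ} {vs : Fin k → V n} (hvs : ∀ j, yWeight (vs j) = 1) {f : W n}
    (hf : f ∈ FW n N) (hk : N ≤ k) : iterD vs f = 0 := by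
  have := iterD_mem_FW hvs hf
  rwa [Nat.sub_eq_zero_of_le hk, FW_zero, Submodule.mem_bot] at this

noncomputable def D (v : V n) : Module.End ℂ (W n) := (pderiv v).toLinearMap

noncomputable def mulHbar (n : ℕ) : Module.End ℂ (W n) := LinearMap.mulLeft ℂ (hbar n)

noncomputable def S (n : ℕ) : Module.End ℂ (W n) :=
  (2 : ℂ)⁻¹ • (mulHbar n * ∑ i, D (yv i) * D (yb i))

theorem S_apply (f : W n) : S n f = Sop f := by
  simp [S, Sop, D, mulHbar, LinearMap.sum_apply, Finset.mul_sum]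

theorem lowersBy_D (j : Fin n ⊕ Fin n) : LowersBy (FW n) 1 (D (Sum.inl j)) :=
  lowersBy_pderiv _

theorem lowersBy_mulHbar : LowersBy (FW n) 0 (mulHbar n) :=
  lowersBy_mulLeft_X rfl

theorem lowersBy_S : LowersBy (FW n) 2 (S n) :=
  (lowersBy_mulHbar.mul (LowersBy.sum _ fun i _ =>
    (lowersBy_D (Sum.inl i)).mul (lowersBy_D (Sum.inr i)))).smul _

noncomputable def diffOps (n : ℕ) : Subalgebra ℂ (Module.End ℂ (W n)) :=
  Algebra.adjoin ℂ (insert (mulHbar n) (Set.range fun j : Fin n ⊕ Fin n => D (Sum.inl j)))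

theorem commute_mulHbar_D (j : Fin n ⊕ Fin n) : Commute (mulHbar n) (D (Sum.inl j)) :=
  LinearMap.ext fun f => by
    simp [mulHbar, D, hbar]

theorem commute_of_mem_diffOps {a b : Module.End ℂ (W n)} (ha : a ∈ diffOps n)
    (hb : b ∈ diffOps n) : Commute a b := by
  refine Algebra.commute_of_mem_adjoin_of_pairwise ?_ ha hb
  rintro _ (rfl | ⟨i, rfl⟩) _ (rfl | ⟨j, rfl⟩)
  · exact Commute.refl _
  · exact commute_mulHbar_D j
  · exact (commute_mulHbar_D i).symm
  · exact LinearMap.ext fun f => pderiv_pderiv_comm_s13 _ _ f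

theorem mulHbar_mem_diffOps : mulHbar n ∈ diffOps n :=
  Algebra.subset_adjoin (Set.mem_insert _ _)

theorem D_mem_diffOps (j : Fin n ⊕ Fin n) : D (Sum.inl j) ∈ diffOps n :=
  Algebra.subset_adjoin (Set.mem_insert_of_mem _ ⟨j, rfl⟩)

theorem S_mem_diffOps : S n ∈ diffOps n :=
  Subalgebra.smul_mem _ (Subalgebra.mul_mem _ mulHbar_mem_diffOps
    (Subalgebra.sum_mem _ fun i _ =>
      Subalgebra.mul_mem _ (D_mem_diffOps (Sum.inl i)) (D_mem_diffOps (Sum.inr i)))) _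

theorem S_pow_apply (m : ℕ) (f : W n) : (S n ^ m) f = Sop^[m] f := by
  rw [Module.End.pow_apply]
  congr
  exact funext S_apply

theorem S_pow_apply_eq_zero {f : W n} {K : ℕ} (hf : f ∈ FW n K) : (S n ^ K) f = 0 :=
  lowersBy_S.pow_apply_eq_zero FW_zero hf le_rfl

theorem expS_eq_expTrunc {f : W n} {K : ℕ} (h : (S n ^ K) f = 0) :
    expS f = expTrunc (S n) K f := by
  rw [← expTrunc_apply_congr (S_pow_apply_eq_zero (mem_FW_totalDegree _)) h, expTrunc_apply, expS]
  simp only [S_pow_apply]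

theorem neg_S_pow_apply (m : ℕ) (f : W n) : ((-S n) ^ m) f = (-1 : ℂ) ^ m • (S n ^ m) f := by
  rw [← neg_one_smul ℂ (S n), smul_pow, LinearMap.smul_apply]

theorem expNegS_eq_expTrunc {f : W n} {K : ℕ} (h : (S n ^ K) f = 0) :
    expNegS f = expTrunc (-S n) K f := by
  have h' : ((-S n) ^ K) f = 0 := by rw [neg_S_pow_apply, h, smul_zero]
  have h₀ : ((-S n) ^ (f.totalDegree + 1)) f = 0 := by
    rw [neg_S_pow_apply, S_pow_apply_eq_zero (mem_FW_totalDegree _), smul_zero]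
  rw [← expTrunc_apply_congr h₀ h', expTrunc_apply, expNegS]
  simp only [neg_S_pow_apply, smul_smul, S_pow_apply, mul_comm]

theorem expS_add (f g : W n) : expS (f + g) = expS f + expS g := by
  have hf : (S n ^ (f.totalDegree + g.totalDegree + 1)) f = 0 :=
    S_pow_apply_eq_zero (weightedDegreeLT_mono _ (by omega) (mem_FW_totalDegree f))
  have hg : (S n ^ (f.totalDegree + g.totalDegree + 1)) g = 0 :=
    S_pow_apply_eq_zero (weightedDegreeLT_mono _ (by omega) (mem_FW_totalDegree g))
  rw [expS_eq_expTrunc hf, expS_eq_expTrunc hg, ← map_add,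
    expS_eq_expTrunc (by rw [map_add, hf, hg, add_zero])]

theorem commute_mulLeft_of_mem_diffOps {c : W n} (hc : ∀ j, pderiv (Sum.inl j) c = 0)
    {a : Module.End ℂ (W n)} (ha : a ∈ diffOps n) : Commute (LinearMap.mulLeft ℂ c) a := by
  refine Algebra.commute_of_mem_adjoin_of_forall_mem_commute ha ?_
  rintro _ (rfl | ⟨j, rfl⟩) <;> refine LinearMap.ext fun f => ?_
  · simp [mulHbar, mul_left_comm]
  · simp [D, hc j]

theorem expS_C_mul_hbar_pow_mul (a : ℂ) (m : ℕ) (f : W n) :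
    expS (C a * hbar n ^ m * f) = C a * hbar n ^ m * expS f := by
  set c := C a * hbar n ^ m
  have hc : Commute (LinearMap.mulLeft ℂ c) (S n) :=
    commute_mulLeft_of_mem_diffOps (fun j => by simp [c, hbar]) S_mem_diffOps
  have hf := S_pow_apply_eq_zero (mem_FW_totalDegree f)
  have hcf : (S n ^ (f.totalDegree + 1)) (c * f) = 0 := by
    simpa [hf] using (LinearMap.congr_fun (hc.pow_right (f.totalDegree + 1)).eq f).symm
  rw [expS_eq_expTrunc hf, expS_eq_expTrunc hcf]
  exact LinearMap.congr_fun (expTrunc_comp_of_comp_eq hc.symm.eq _) f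

theorem expS_expNegS (f : W n) : expS (expNegS f) = f := by
  have hf := mem_FW_totalDegree f
  rw [expNegS_eq_expTrunc (S_pow_apply_eq_zero hf), expS_eq_expTrunc (S_pow_apply_eq_zero
    (lowersBy_S.neg.expTrunc_apply_mem (weightedDegreeLT_mono _) _ hf))]
  exact lowersBy_S.expTrunc_apply_expTrunc_neg_apply FW_zero hf

theorem expNegS_expS (f : W n) : expNegS (expS f) = f := by
  have hf := mem_FW_totalDegree f
  rw [expS_eq_expTrunc (S_pow_apply_eq_zero hf), expNegS_eq_expTrunc (S_pow_apply_eq_zero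
    (lowersBy_S.expTrunc_apply_mem (weightedDegreeLT_mono _) _ hf))]
  simpa using lowersBy_S.neg.expTrunc_apply_expTrunc_neg_apply FW_zero hf

theorem expS_mem_FW {f : W n} {K : ℕ} (hf : f ∈ FW n K) : expS f ∈ FW n K := by
  rw [expS_eq_expTrunc (S_pow_apply_eq_zero hf)]
  exact lowersBy_S.expTrunc_apply_mem (weightedDegreeLT_mono _) K hf

abbrev T (n : ℕ) : Type := W n ⊗[ℂ] W n

noncomputable abbrev FT (n : ℕ) : ℕ → Submodule ℂ (T n) := tensorFiltration (FW n) (FW n)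

theorem FT_zero : FT n 0 = ⊥ := tensorFiltration_zero FW_zero

noncomputable def tensorOps (n : ℕ) : Subalgebra ℂ (Module.End ℂ (T n)) :=
  Algebra.adjoin ℂ {z | ∃ a ∈ diffOps n, ∃ b ∈ diffOps n, TensorProduct.map a b = z}

theorem map_mem_tensorOps {a b : Module.End ℂ (W n)} (ha : a ∈ diffOps n) (hb : b ∈ diffOps n) :
    TensorProduct.map a b ∈ tensorOps n :=
  Algebra.subset_adjoin ⟨a, ha, b, hb, rfl⟩

theorem commute_of_mem_tensorOps {x y : Module.End ℂ (T n)} (hx : x ∈ tensorOps n)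
    (hy : y ∈ tensorOps n) : Commute x y := by
  refine Algebra.commute_of_mem_adjoin_of_pairwise ?_ hx hy
  rintro _ ⟨a, ha, b, hb, rfl⟩ _ ⟨c, hc, d, hd, rfl⟩
  rw [Commute, SemiconjBy, ← TensorProduct.map_mul, ← TensorProduct.map_mul,
    (commute_of_mem_diffOps ha hc).eq, (commute_of_mem_diffOps hb hd).eq]

noncomputable def hbarT (n : ℕ) : Module.End ℂ (T n) := TensorProduct.map (mulHbar n) 1

noncomputable def pairing (u v : Fin n → Fin n ⊕ Fin n) : Module.End ℂ (T n) :=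
  ∑ i, TensorProduct.map (D (Sum.inl (u i))) (D (Sum.inl (v i)))

noncomputable def hP (n : ℕ) : Module.End ℂ (T n) := hbarT n * pairing Sum.inl Sum.inr

noncomputable def hQ (n : ℕ) : Module.End ℂ (T n) := hbarT n * pairing Sum.inr Sum.inl

noncomputable def leibnizOp (n : ℕ) : Module.End ℂ (T n) :=
  TensorProduct.map (S n) 1 + TensorProduct.map 1 (S n) + (2 : ℂ)⁻¹ • (hP n + hQ n)

theorem hbarT_mem_tensorOps : hbarT n ∈ tensorOps n :=
  map_mem_tensorOps mulHbar_mem_diffOps (Subalgebra.one_mem _)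

theorem pairing_mem_tensorOps (u v : Fin n → Fin n ⊕ Fin n) : pairing u v ∈ tensorOps n :=
  Subalgebra.sum_mem _ fun _ _ => map_mem_tensorOps (D_mem_diffOps _) (D_mem_diffOps _)

theorem hP_mem_tensorOps : hP n ∈ tensorOps n :=
  Subalgebra.mul_mem _ hbarT_mem_tensorOps (pairing_mem_tensorOps _ _)

theorem hQ_mem_tensorOps : hQ n ∈ tensorOps n :=
  Subalgebra.mul_mem _ hbarT_mem_tensorOps (pairing_mem_tensorOps _ _)

theorem map_S_one_mem_tensorOps : TensorProduct.map (S n) 1 ∈ tensorOps n :=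
  map_mem_tensorOps S_mem_diffOps (Subalgebra.one_mem _)

theorem map_one_S_mem_tensorOps : TensorProduct.map 1 (S n) ∈ tensorOps n :=
  map_mem_tensorOps (Subalgebra.one_mem _) S_mem_diffOps

theorem leibnizOp_mem_tensorOps : leibnizOp n ∈ tensorOps n :=
  Subalgebra.add_mem _ (Subalgebra.add_mem _ map_S_one_mem_tensorOps map_one_S_mem_tensorOps)
    (Subalgebra.smul_mem _ (Subalgebra.add_mem _ hP_mem_tensorOps hQ_mem_tensorOps) _)

theorem lowersBy_hbarT : LowersBy (FT n) 0 (hbarT n) :=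
  (LowersBy.map FW_zero FW_zero lowersBy_mulHbar LowersBy.one :)

theorem lowersBy_pairing (u v : Fin n → Fin n ⊕ Fin n) : LowersBy (FT n) 2 (pairing u v) :=
  LowersBy.sum _ fun _ _ => (LowersBy.map FW_zero FW_zero (lowersBy_D _) (lowersBy_D _) :)

theorem lowersBy_hP : LowersBy (FT n) 2 (hP n) :=
  ((lowersBy_hbarT (n := n)).mul (lowersBy_pairing _ _) :)

theorem lowersBy_hQ : LowersBy (FT n) 2 (hQ n) :=
  ((lowersBy_hbarT (n := n)).mul (lowersBy_pairing _ _) :)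

theorem lowersBy_map_S_one : LowersBy (FT n) 2 (TensorProduct.map (S n) 1) :=
  (LowersBy.map FW_zero FW_zero lowersBy_S LowersBy.one :)

theorem lowersBy_map_one_S : LowersBy (FT n) 2 (TensorProduct.map 1 (S n)) :=
  (LowersBy.map FW_zero FW_zero LowersBy.one lowersBy_S :)

theorem lowersBy_leibnizOp : LowersBy (FT n) 2 (leibnizOp n) :=
  (lowersBy_map_S_one.add lowersBy_map_one_S).add ((lowersBy_hP.add lowersBy_hQ).smul _)

theorem Sop_mul (f g : W n) :
    Sop (f * g) = Sop f * g + f * Sop g + (2 : ℂ)⁻¹ • (hbar n * ∑ i,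
      (pderiv (yv i) f * pderiv (yb i) g + pderiv (yb i) f * pderiv (yv i) g)) := by
  simp only [Sop, pderiv_mul, map_add, smul_eq_C_mul, Finset.mul_sum, Finset.sum_mul,
    ← Finset.sum_add_distrib]
  exact Finset.sum_congr rfl fun i _ => by ring

theorem S_comp_mul' :
    S n ∘ₗ LinearMap.mul' ℂ (W n) = LinearMap.mul' ℂ (W n) ∘ₗ leibnizOp n := by
  refine TensorProduct.ext' fun f g => ?_
  simp [leibnizOp, hP, hQ, hbarT, pairing, S_apply, Sop_mul, D, mulHbar, LinearMap.sum_apply,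
    Finset.mul_sum, Finset.sum_add_distrib, mul_assoc, mul_add, smul_add, yv, yb]

theorem hbarT_pow_tmul (m : ℕ) (f g : W n) :
    (hbarT n ^ m) (f ⊗ₜ g) = (hbar n ^ m * f) ⊗ₜ g := by
  rw [hbarT, TensorProduct.map_pow, map_tmul, one_pow, Module.End.one_apply, mulHbar,
    LinearMap.pow_mulLeft, LinearMap.mulLeft_apply]

theorem pairing_pow_tmul (u v : Fin n → Fin n ⊕ Fin n) (k : ℕ) (f g : W n) :
    (pairing u v ^ k) (f ⊗ₜ g) = ∑ t : Fin k → Fin n,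
      iterD (fun j => Sum.inl (u (t j))) f ⊗ₜ iterD (fun j => Sum.inl (v (t j))) g := by
  induction k with
  | zero => simp [iterD_zero]
  | succ k ih =>
    rw [pow_succ', Module.End.mul_apply, ih, map_sum,
      ← (Fin.consEquiv fun _ => Fin n).sum_comp, Fintype.sum_prod_type, Finset.sum_comm]
    refine Finset.sum_congr rfl fun t _ => ?_
    simp [pairing, LinearMap.sum_apply, D, iterD_succ]

theorem hP_pow_mul_hQ_pow (k l : ℕ) : hP n ^ k * hQ n ^ l =
    hbarT n ^ (k + l) * (pairing Sum.inl Sum.inr ^ k * pairing Sum.inr Sum.inl ^ l) := by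
  have hHP := commute_of_mem_tensorOps (hbarT_mem_tensorOps (n := n))
    (pairing_mem_tensorOps Sum.inl Sum.inr)
  have hHQ := commute_of_mem_tensorOps (hbarT_mem_tensorOps (n := n))
    (pairing_mem_tensorOps Sum.inr Sum.inl)
  rw [hP, hQ, hHP.mul_pow, hHQ.mul_pow, pow_add, mul_assoc, mul_assoc,
    ← mul_assoc (pairing _ _ ^ k), ← (hHP.pow_pow l k).eq, mul_assoc]

theorem moyal_pow_tmul (k l : ℕ) (f g : W n) :
    (((2 : ℂ)⁻¹ • hP n) ^ k * ((-(2 : ℂ)⁻¹) • hQ n) ^ l) (f ⊗ₜ g) =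
      ((2 : ℂ)⁻¹ ^ k * (-(2 : ℂ)⁻¹) ^ l) • ∑ u : Fin l → Fin n, ∑ t : Fin k → Fin n,
        (hbar n ^ (k + l) * iterD (fun j => yv (t j)) (iterD (fun j => yb (u j)) f)) ⊗ₜ
          iterD (fun j => yb (t j)) (iterD (fun j => yv (u j)) g) := by
  rw [smul_pow, smul_pow, smul_mul_smul_comm, hP_pow_mul_hQ_pow, LinearMap.smul_apply,
    Module.End.mul_apply, Module.End.mul_apply, pairing_pow_tmul]
  simp only [map_sum, pairing_pow_tmul, hbarT_pow_tmul]
  rfl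

theorem moyal_pow_tmul_eq_zero {f : W n} {N k l : ℕ} (hf : f ∈ FW n N) (h : N ≤ k + l)
    (g : W n) : (((2 : ℂ)⁻¹ • hP n) ^ k * ((-(2 : ℂ)⁻¹) • hQ n) ^ l) (f ⊗ₜ g) = 0 := by
  rw [moyal_pow_tmul]
  refine smul_eq_zero_of_right _ (sum_eq_zero fun u _ => sum_eq_zero fun t _ => ?_)
  rw [iterD_eq_zero (fun _ => rfl) (iterD_mem_FW (fun _ => rfl) hf) (by omega : N - l ≤ k),
    mul_zero, zero_tmul]

theorem mul'_moyal_term (k l : ℕ) (f g : W n) :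
    LinearMap.mul' ℂ (W n) (((k.factorial : ℂ)⁻¹ * (l.factorial : ℂ)⁻¹) •
      (((2 : ℂ)⁻¹ • hP n) ^ k * ((-(2 : ℂ)⁻¹) • hQ n) ^ l) (f ⊗ₜ g)) =
    ((-1 : ℂ) ^ l) • (((2 : ℂ)⁻¹ • hbar n) ^ (k + l) * mwTerm k l f g) := by
  rw [moyal_pow_tmul, mwTerm, Finset.sum_comm (s := (univ : Finset (Fin l → Fin n)))]
  simp only [map_smul, map_sum, LinearMap.mul'_apply, smul_pow, smul_mul_assoc, mul_smul_comm,
    Finset.mul_sum, Finset.smul_sum, smul_smul, mul_assoc]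
  refine sum_congr rfl fun t _ => sum_congr rfl fun u _ => ?_
  rw [neg_pow (2 : ℂ)⁻¹]
  congr 1
  ring

theorem moyal_eq_mul'_expTrunc (f g : W n) {K : ℕ} (hK : f.totalDegree + 1 ≤ K) :
    moyal f g = LinearMap.mul' ℂ (W n)
      (expTrunc ((2 : ℂ)⁻¹ • hP n) K (expTrunc ((-(2 : ℂ)⁻¹) • hQ n) K (f ⊗ₜ g))) := by
  set term : ℕ → ℕ → T n := fun k l => ((k.factorial : ℂ)⁻¹ * (l.factorial : ℂ)⁻¹) •
    (((2 : ℂ)⁻¹ • hP n) ^ k * ((-(2 : ℂ)⁻¹) • hQ n) ^ l) (f ⊗ₜ g)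
  have hterm : ∀ k l, f.totalDegree + 1 ≤ k + l → term k l = 0 := fun k l h => by
    simp only [term, moyal_pow_tmul_eq_zero (mem_FW_totalDegree f) h, smul_zero]
  rw [expTrunc_apply_expTrunc_apply, sum_range_sum_range_eq_of_eq_zero hterm hK,
    ← sum_range_sum_range_eq_of_eq_zero hterm le_rfl, moyal]
  simp only [map_sum, term, mul'_moyal_term]

theorem mul'_wick_term (k : ℕ) (F G : W n) :
    LinearMap.mul' ℂ (W n) ((k.factorial : ℂ)⁻¹ • (hP n ^ k) (F ⊗ₜ G)) =
      hbar n ^ k * wickTerm k F G := by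
  rw [hP, (commute_of_mem_tensorOps hbarT_mem_tensorOps (pairing_mem_tensorOps _ _)).mul_pow,
    Module.End.mul_apply, pairing_pow_tmul]
  simp only [map_sum, hbarT_pow_tmul, map_smul, LinearMap.mul'_apply, wickTerm, mul_smul_comm,
    Finset.mul_sum, mul_assoc]
  rfl

theorem wickTerm_eq_zero {F : W n} {N k : ℕ} (hF : F ∈ FW n N) (hk : N ≤ k) (G : W n) :
    wickTerm k F G = 0 := by
  rw [wickTerm]
  refine smul_eq_zero_of_right _ (sum_eq_zero fun t _ => ?_)
  rw [iterD_eq_zero (fun _ => rfl) hF hk, zero_mul]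

theorem wick_eq_mul'_expTrunc {F : W n} {K : ℕ} (hF : F ∈ FW n K) (G : W n) :
    wick F G = LinearMap.mul' ℂ (W n) (expTrunc (hP n) K (F ⊗ₜ G)) := by
  rw [wick, sum_range_eq_sum_range_of_eq_zero (K₂ := K)
    (fun k hk => by rw [wickTerm_eq_zero (mem_FW_totalDegree F) hk, mul_zero])
    (fun k hk => by rw [wickTerm_eq_zero hF hk, mul_zero]), expTrunc_apply, map_sum]
  simp only [mul'_wick_term]

noncomputable def moyalOp (n : ℕ) : Module.End ℂ (T n) :=
  (2 : ℂ)⁻¹ • hP n + (-(2 : ℂ)⁻¹) • hQ n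

theorem moyalOp_mem_tensorOps : moyalOp n ∈ tensorOps n :=
  Subalgebra.add_mem _ (Subalgebra.smul_mem _ hP_mem_tensorOps _)
    (Subalgebra.smul_mem _ hQ_mem_tensorOps _)

theorem lowersBy_moyalOp : LowersBy (FT n) 2 (moyalOp n) :=
  (lowersBy_hP.smul _).add (lowersBy_hQ.smul _)

theorem moyal_eq_mul'_expTrunc_moyalOp (f g : W n) {K : ℕ} (hK : f.totalDegree + 1 ≤ K) :
    moyal f g = LinearMap.mul' ℂ (W n) (expTrunc (moyalOp n) K (f ⊗ₜ g)) := by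
  rw [moyal_eq_mul'_expTrunc f g hK, moyalOp, expTrunc_add_apply
    (commute_of_mem_tensorOps (Subalgebra.smul_mem _ hP_mem_tensorOps _)
      (Subalgebra.smul_mem _ hQ_mem_tensorOps _))
    (fun k l h => moyal_pow_tmul_eq_zero (mem_FW_totalDegree f) h g) hK]

theorem leibnizOp_add_moyalOp : leibnizOp n + moyalOp n =
    hP n + (TensorProduct.map (S n) 1 + TensorProduct.map 1 (S n)) := by
  rw [leibnizOp, moyalOp]
  module

theorem expS_mul'_eq_mul'_expTrunc_leibnizOp {z : T n} {K : ℕ} (hz : z ∈ FT n K) :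
    expS (LinearMap.mul' ℂ (W n) z) = LinearMap.mul' ℂ (W n) (expTrunc (leibnizOp n) K z) := by
  have hS : (S n ^ K) (LinearMap.mul' ℂ (W n) z) = 0 := by
    rw [← LinearMap.comp_apply, Module.End.commute_pow_left_of_commute S_comp_mul',
      LinearMap.comp_apply, lowersBy_leibnizOp.pow_apply_eq_zero FT_zero hz le_rfl, map_zero]
  rw [expS_eq_expTrunc hS, ← LinearMap.comp_apply, expTrunc_comp_of_comp_eq S_comp_mul',
    LinearMap.comp_apply]

theorem expTrunc_leibnizOp_expTrunc_moyalOp {x : T n} {K : ℕ} (hx : x ∈ FT n K) :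
    expTrunc (leibnizOp n) K (expTrunc (moyalOp n) K x) = expTrunc (hP n) K
      (expTrunc (TensorProduct.map (S n) 1) K (expTrunc (TensorProduct.map 1 (S n)) K x)) := by
  rw [← lowersBy_leibnizOp.expTrunc_add_apply FT_zero
      (commute_of_mem_tensorOps leibnizOp_mem_tensorOps moyalOp_mem_tensorOps)
      lowersBy_moyalOp hx, leibnizOp_add_moyalOp,
    lowersBy_hP.expTrunc_add_apply FT_zero (commute_of_mem_tensorOps hP_mem_tensorOps
      (Subalgebra.add_mem _ map_S_one_mem_tensorOps map_one_S_mem_tensorOps))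
      (lowersBy_map_S_one.add lowersBy_map_one_S) hx,
    lowersBy_map_S_one.expTrunc_add_apply FT_zero (commute_of_mem_tensorOps
      map_S_one_mem_tensorOps map_one_S_mem_tensorOps) lowersBy_map_one_S hx]

theorem expS_moyal (f g : W n) : expS (moyal f g) = wick (expS f) (expS g) := by
  set K := (f.totalDegree + 1) + (g.totalDegree + 1)
  have hf : f ∈ FW n K := weightedDegreeLT_mono _ (by omega) (mem_FW_totalDegree f)
  have hg : g ∈ FW n K := weightedDegreeLT_mono _ (by omega) (mem_FW_totalDegree g)
  have hx : f ⊗ₜ g ∈ FT n K :=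
    tmul_mem_tensorFiltration (mem_FW_totalDegree f) (mem_FW_totalDegree g) le_rfl
  rw [moyal_eq_mul'_expTrunc_moyalOp f g (K := K) (by omega),
    expS_mul'_eq_mul'_expTrunc_leibnizOp
      (lowersBy_moyalOp.expTrunc_apply_mem tensorFiltration_mono K hx),
    expTrunc_leibnizOp_expTrunc_moyalOp hx, expTrunc_one_map_tmul, expTrunc_map_one_tmul,
    ← expS_eq_expTrunc (S_pow_apply_eq_zero hf), ← expS_eq_expTrunc (S_pow_apply_eq_zero hg),
    wick_eq_mul'_expTrunc (expS_mem_FW hf)]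

theorem expS_intertwines_moyal_wick_general (n : ℕ) :
    (∀ f g : W n, expS (f + g) = expS f + expS g) ∧
    (∀ (a : ℂ) (m : ℕ) (f : W n),
      expS (C a * hbar n ^ m * f) = C a * hbar n ^ m * expS f) ∧
    (∀ f : W n, expS (expNegS f) = f ∧ expNegS (expS f) = f) ∧
    Function.Bijective (expS (n := n)) ∧
    (∀ f g : W n, expS (moyal f g) = wick (expS f) (expS g)) :=
  ⟨expS_add, expS_C_mul_hbar_pow_mul, fun f => ⟨expS_expNegS f, expNegS_expS f⟩,
    ⟨Function.LeftInverse.injective expNegS_expS, Function.RightInverse.surjective expS_expNegS⟩,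
    expS_moyal⟩

theorem expS_intertwines_moyal_wick (n : ℕ) (hn : 1 ≤ n) :
    (∀ f g : W n, expS (f + g) = expS f + expS g) ∧
    (∀ (a : ℂ) (m : ℕ) (f : W n),
      expS (C a * hbar n ^ m * f) = C a * hbar n ^ m * expS f) ∧
    (∀ f : W n, expS (expNegS f) = f ∧ expNegS (expS f) = f) ∧
    Function.Bijective (expS (n := n)) ∧
    (∀ f g : W n, expS (moyal f g) = wick (expS f) (expS g)) :=
  expS_intertwines_moyal_wick_general n

end Stmt13
end

section
/- The full Taylor expansion intertwines Wick products (flat Fedosov correspondence): the ℂ[ħ]-linear map T : B[ħ] → C[ħ] defined on B by T(f) = Σ_{a,b ∈ ℕⁿ} (1/(a!·b!)) (∂^{|a|+|b|}f/∂z^a∂z̄^b)·y^a ȳ^b (equivalently T(f)(z, z̄, y, ȳ) = f(z+y, z̄+ȳ)) is an injective algebra homomorphism from (B[ħ], ⋆_z) to (C[ħ], ⋆_y): T(f ⋆_z g) = T(f) ⋆_y T(g) for all f, g ∈ B[ħ], and T(f) recovers f by setting y = ȳ = 0. -/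
/-!
STATEMENT 18: The full Taylor expansion intertwines Wick products (flat Fedosov
correspondence): the ℂ[ħ]-linear map T : B[ħ] → C[ħ] defined on B by
T(f) = Σ_{a,b} (1/(a!·b!)) (∂^{|a|+|b|}f/∂z^a∂z̄^b)·y^a ȳ^b (equivalently
T(f)(z, z̄, y, ȳ) = f(z+y, z̄+ȳ)) is an injective algebra homomorphism from
(B[ħ], ⋆_z) to (C[ħ], ⋆_y): T(f ⋆_z g) = T(f) ⋆_y T(g) for all f, g ∈ B[ħ],
and T(f) recovers f by setting y = ȳ = 0.
-/

open MvPolynomial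

namespace Stmt18

/-- Variables of `B[ħ]`: `Sum.inl (Sum.inl i)` is `zⁱ`, `Sum.inl (Sum.inr i)`
is `z̄ⁱ`, `Sum.inr ()` is `ħ`. -/
abbrev VB (n : ℕ) : Type := (Fin n ⊕ Fin n) ⊕ Unit

/-- Variables of `C[ħ]`: `Sum.inl (Sum.inl i)` is `zⁱ`, `Sum.inl (Sum.inr i)`
is `z̄ⁱ`, `Sum.inr (Sum.inl (Sum.inl i))` is `yⁱ`,
`Sum.inr (Sum.inl (Sum.inr i))` is `ȳⁱ`, and `Sum.inr (Sum.inr ())` is `ħ`. -/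
abbrev VC (n : ℕ) : Type := (Fin n ⊕ Fin n) ⊕ ((Fin n ⊕ Fin n) ⊕ Unit)

/-- `B[ħ] = ℂ[z,z̄][ħ]`. -/
abbrev BH (n : ℕ) : Type := MvPolynomial (VB n) ℂ

/-- `C[ħ] = ℂ[z,z̄,y,ȳ][ħ]`. -/
abbrev CH (n : ℕ) : Type := MvPolynomial (VC n) ℂ

/-- Iterated partial derivative along a tuple of variables. -/
noncomputable def iterD {σ : Type} {k : ℕ} (vs : Fin k → σ) (f : MvPolynomial σ ℂ) :
    MvPolynomial σ ℂ :=
  (List.ofFn vs).foldr (fun v acc => pderiv v acc) f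

/-- The generic Wick product with "holomorphic" variables `u i`,
"anti-holomorphic" variables `v i` and parameter `h`:
`f ⋆ g = Σ_{k≥0} (hᵏ/k!) Σ_{i₁,…,i_k} (∂ᵏf/∂u^{i₁}⋯)·(∂ᵏg/∂v^{i₁}⋯)`; the sum
is finite since the `k`-fold derivative of `f` vanishes for
`k > totalDegree f`, so the truncation loses nothing. -/
noncomputable def wickGen {σ : Type} {n : ℕ} (u v : Fin n → σ)
    (h : MvPolynomial σ ℂ) (f g : MvPolynomial σ ℂ) : MvPolynomial σ ℂ :=
  ∑ k ∈ Finset.range (f.totalDegree + 1),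
    h ^ k * ((k.factorial : ℂ))⁻¹ •
      ∑ t : Fin k → Fin n,
        iterD (fun j => u (t j)) f * iterD (fun j => v (t j)) g

/-- The Wick product `⋆_z` on `B[ħ]`. -/
noncomputable def wickB {n : ℕ} (f g : BH n) : BH n :=
  wickGen (fun i => Sum.inl (Sum.inl i)) (fun i => Sum.inl (Sum.inr i))
    (X (Sum.inr ())) f g

/-- The fiberwise Wick product `⋆_y` on `C[ħ]`. -/
noncomputable def wickC {n : ℕ} (f g : CH n) : CH n :=
  wickGen (fun i => Sum.inr (Sum.inl (Sum.inl i)))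
    (fun i => Sum.inr (Sum.inl (Sum.inr i))) (X (Sum.inr (Sum.inr ()))) f g

/-- The full Taylor expansion `T(f)(z, z̄, y, ȳ, ħ) = f(z+y, z̄+ȳ, ħ)`,
equivalently `T(f) = Σ_{a,b∈ℕⁿ} (1/(a!·b!)) (∂^{|a|+|b|}f/∂z^a∂z̄^b)·y^a ȳ^b`;
it is a ℂ[ħ]-linear algebra map. -/
noncomputable def T {n : ℕ} : BH n →ₐ[ℂ] CH n :=
  aeval fun v => match v with
    | Sum.inl (Sum.inl i) =>
        X (Sum.inl (Sum.inl i)) + X (Sum.inr (Sum.inl (Sum.inl i)))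
    | Sum.inl (Sum.inr i) =>
        X (Sum.inl (Sum.inr i)) + X (Sum.inr (Sum.inl (Sum.inr i)))
    | Sum.inr _ => X (Sum.inr (Sum.inr ()))

/-- Setting `y = ȳ = 0` (the symbol map `C[ħ] → B[ħ]`). -/
noncomputable def symb {n : ℕ} : CH n →ₐ[ℂ] BH n :=
  aeval fun v => match v with
    | Sum.inl w => X (Sum.inl w)
    | Sum.inr (Sum.inl _) => 0
    | Sum.inr (Sum.inr _) => X (Sum.inr ())

end Stmt18

/-!
`T` is the substitution `z ↦ z + y`, `z̄ ↦ z̄ + ȳ`, so by the chain rule it intertwines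
`∂/∂zⁱ` with `∂/∂yⁱ` and `∂/∂z̄ⁱ` with `∂/∂ȳⁱ`. Hence it carries each term of the Wick series of
`f ⋆_z g` to the corresponding term of the series of `T f ⋆_y T g`. Both series are cut off at the
total degree of the first factor, which `T` preserves: it and its left inverse `symb` (set
`y = ȳ = 0`) substitute polynomials of degree at most one. The left inverse also gives injectivity.
-/

namespace MvPolynomial

variable {R σ τ : Type*} [CommSemiring R]

theorem totalDegree_aeval_le_of_totalDegree_le_one (g : σ → MvPolynomial τ R)
    (hg : ∀ v, (g v).totalDegree ≤ 1) (p : MvPolynomial σ R) :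
    (aeval g p).totalDegree ≤ p.totalDegree := by
  conv_lhs => rw [p.as_sum, map_sum]
  refine totalDegree_finsetSum_le fun s hs => ?_
  rw [aeval_monomial]
  calc (algebraMap R _ (coeff s p) * s.prod fun i e => g i ^ e).totalDegree
      ≤ (s.prod fun i e => g i ^ e).totalDegree := by
        refine (totalDegree_mul _ _).trans ?_
        rw [algebraMap_eq, totalDegree_C, zero_add]
    _ ≤ s.sum fun _ e => e := by
        refine (totalDegree_finsetProd _ _).trans (Finset.sum_le_sum fun i _ => ?_)
        exact (totalDegree_pow _ _).trans (mul_le_of_le_one_right (Nat.zero_le _) (hg i))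
    _ ≤ p.totalDegree := le_totalDegree hs

theorem aeval_pderiv_eq_pderiv_aeval [DecidableEq σ]
    (g : σ → MvPolynomial τ R) (i : σ) (j : τ)
    (hg : ∀ v, pderiv j (g v) = if v = i then 1 else 0) (p : MvPolynomial σ R) :
    aeval g (pderiv i p) = pderiv j (aeval g p) := by
  induction p using MvPolynomial.induction_on with
  | C a => simp
  | add p q hp hq => simp only [map_add, hp, hq]
  | mul_X p v ih =>
    have hXv : aeval g (pderiv i (X v : MvPolynomial σ R)) = pderiv j (g v) := by
      rw [hg, pderiv_X, Pi.single_apply]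
      split_ifs <;> simp
    simp only [Derivation.leibniz, smul_eq_mul, map_add, map_mul, aeval_X, ih, hXv]

end MvPolynomial

namespace Stmt18

theorem map_iterD {σ τ ι : Type} (φ : MvPolynomial σ ℂ → MvPolynomial τ ℂ) (a : ι → σ)
    (b : ι → τ) (h : ∀ i f, φ (pderiv (a i) f) = pderiv (b i) (φ f)) {k : ℕ} (t : Fin k → ι)
    (f : MvPolynomial σ ℂ) :
    φ (iterD (fun j => a (t j)) f) = iterD (fun j => b (t j)) (φ f) := by
  have foldr_map : ∀ l : List ι, φ ((l.map a).foldr (fun v acc => pderiv v acc) f)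
      = (l.map b).foldr (fun v acc => pderiv v acc) (φ f) := by
    intro l
    induction l with
    | nil => rfl
    | cons i l ih => simp only [List.map_cons, List.foldr_cons, h, ih]
  simpa only [iterD, List.map_ofFn, Function.comp_def] using foldr_map (List.ofFn t)

theorem map_wickGen {σ τ : Type} {n : ℕ} (φ : MvPolynomial σ ℂ →ₐ[ℂ] MvPolynomial τ ℂ)
    {u v : Fin n → σ} {u' v' : Fin n → τ}
    (hu : ∀ i f, φ (pderiv (u i) f) = pderiv (u' i) (φ f))
    (hv : ∀ i f, φ (pderiv (v i) f) = pderiv (v' i) (φ f))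
    (h f g : MvPolynomial σ ℂ) (hf : (φ f).totalDegree = f.totalDegree) :
    φ (wickGen u v h f g) = wickGen u' v' (φ h) (φ f) (φ g) := by
  simp only [wickGen, map_sum, map_mul, map_pow, map_smul, hf, map_iterD φ u u' hu,
    map_iterD φ v v' hv]

theorem symb_comp_T {n : ℕ} : symb.comp T = AlgHom.id ℂ (BH n) := by
  apply algHom_ext
  rintro ((i | i) | ⟨⟩) <;> simp [T, symb]

theorem symb_T {n : ℕ} (f : BH n) : symb (T f) = f :=
  AlgHom.congr_fun symb_comp_T f

theorem totalDegree_T {n : ℕ} (f : BH n) : (T f).totalDegree = f.totalDegree := by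
  refine le_antisymm (totalDegree_aeval_le_of_totalDegree_le_one _ ?_ f) ?_
  · rintro ((i | i) | ⟨⟩)
    iterate 2 exact (totalDegree_add _ _).trans (by simp [totalDegree_X])
    simp [totalDegree_X]
  · calc f.totalDegree = (symb (T f)).totalDegree := by rw [symb_T]
      _ ≤ (T f).totalDegree := totalDegree_aeval_le_of_totalDegree_le_one _
          (by rintro ((i | i) | ((i | i) | ⟨⟩)) <;> simp [totalDegree_X]) _

theorem T_pderiv {n : ℕ} (w : Fin n ⊕ Fin n) (f : BH n) :
    T (pderiv (Sum.inl w) f) = pderiv (Sum.inr (Sum.inl w)) (T f) :=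
  aeval_pderiv_eq_pderiv_aeval _ _ _
    (by rintro ((j | j) | ⟨⟩) <;> rcases w with i | i <;> simp [pderiv_X, Pi.single_apply]) f

theorem T_wickB {n : ℕ} (f g : BH n) : T (wickB f g) = wickC (T f) (T g) := by
  rw [wickB, map_wickGen T (fun i => T_pderiv (Sum.inl i)) (fun i => T_pderiv (Sum.inr i)) _ f g
    (totalDegree_T f)]
  simp [T, wickC]

theorem taylor_intertwines_wick_general (n : ℕ) :
    Function.Injective (T (n := n)) ∧
    (∀ f g : BH n, T (wickB f g) = wickC (T f) (T g)) ∧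
    (∀ f : BH n, symb (T f) = f) :=
  ⟨Function.LeftInverse.injective symb_T, T_wickB, symb_T⟩

theorem taylor_intertwines_wick (n : ℕ) (hn : 1 ≤ n) :
    Function.Injective (T (n := n)) ∧
    (∀ f g : BH n, T (wickB f g) = wickC (T f) (T g)) ∧
    (∀ f : BH n, symb (T f) = f) :=
  taylor_intertwines_wick_general n

end Stmt18
end
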